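/- arXiv:2301.07812 — 7 statements merged into one kernel-verified Lean document; each statement's English description precedes it below -/
import Mathlib

section
/- Let σ be a real symmetric traceless n×n matrix (n ≥ 2). Then (trace(σ³))² ≤ ((n-2)²/(n(n-1))) · (trace(σ²))³. -/
/-! Diagonalising `σ` reduces the claim to reals `x₁, …, xₙ` with `∑ xᵢ = 0`. Write
`∑ xᵢ² = n (n - 1) c²` with `c ≥ 0`; Cauchy–Schwarz on the other `n - 1` entries gives
`xᵢ ≤ (n - 1) c`, hence `(xᵢ - (n - 1) c) (xᵢ + c)² ≤ 0`. Summing these cubic inequalities gives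
`∑ xᵢ³ ≤ (n - 2) c ∑ xᵢ²`, with equality at the extremal vector `((n - 1) c, -c, …, -c)`;
applying this to `-x` as well and squaring gives the bound. -/

open Finset Fintype

section SumZero

variable {ι : Type*} [Fintype ι] {x : ι → ℝ}

lemma card_mul_sq_le_of_sum_eq_zero (hx : ∑ j, x j = 0) (i : ι) :
    card ι * x i ^ 2 ≤ (card ι - 1) * ∑ j, x j ^ 2 := by
  classical
  have hrest : ∑ j ∈ univ.erase i, x j = -x i := by
    linarith [add_sum_erase univ x (mem_univ i)]
  have hrest_sq : ∑ j ∈ univ.erase i, x j ^ 2 = ∑ j, x j ^ 2 - x i ^ 2 := by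
    linarith [add_sum_erase univ (x · ^ 2) (mem_univ i)]
  have hcard : ((univ.erase i).card : ℝ) = card ι - 1 := by
    rw [card_erase_of_mem (mem_univ i), card_univ, Nat.cast_pred (card_pos_iff.2 ⟨i⟩)]
  have := sq_sum_le_card_mul_sum_sq (s := univ.erase i) (f := x)
  rw [hrest, hrest_sq, hcard, neg_sq] at this
  linarith

lemma le_card_sub_one_mul_of_sum_eq_zero {c : ℝ} (hx : ∑ j, x j = 0) (hc : 0 ≤ c)
    (hS : ∑ j, x j ^ 2 = card ι * (card ι - 1) * c ^ 2) (i : ι) :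
    x i ≤ (card ι - 1) * c := by
  have hn : (1 : ℝ) ≤ card ι := Nat.one_le_cast.2 (card_pos_iff.2 ⟨i⟩)
  have hsq : x i ^ 2 ≤ ((card ι - 1) * c) ^ 2 := by
    have := card_mul_sq_le_of_sum_eq_zero hx i
    rw [hS] at this
    nlinarith
  exact (abs_le_of_sq_le_sq hsq (by positivity)).trans' (le_abs_self _)

lemma sum_cube_le_of_sum_eq_zero {c : ℝ} (hx : ∑ j, x j = 0) (hc : 0 ≤ c)
    (hS : ∑ j, x j ^ 2 = card ι * (card ι - 1) * c ^ 2) :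
    ∑ j, x j ^ 3 ≤ (card ι - 2) * c * ∑ j, x j ^ 2 := by
  set n : ℝ := card ι
  have hcubic (j : ι) : x j ^ 3 ≤ (n - 3) * c * x j ^ 2 + (2 * n - 3) * c ^ 2 * x j
      + (n - 1) * c ^ 3 := by
    have hle := le_card_sub_one_mul_of_sum_eq_zero hx hc hS j
    nlinarith [mul_nonneg (sub_nonneg.2 hle) (sq_nonneg (x j + c))]
  calc ∑ j, x j ^ 3
      ≤ ∑ j, ((n - 3) * c * x j ^ 2 + (2 * n - 3) * c ^ 2 * x j + (n - 1) * c ^ 3) :=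
        sum_le_sum fun j _ => hcubic j
    _ = (n - 3) * c * ∑ j, x j ^ 2 + (2 * n - 3) * c ^ 2 * ∑ j, x j + n * (n - 1) * c ^ 3 := by
        simp only [sum_add_distrib, ← mul_sum, sum_const, card_univ, nsmul_eq_mul]; ring
    _ = (n - 2) * c * ∑ j, x j ^ 2 := by rw [hx, hS]; ring

theorem sq_sum_cube_le_of_sum_eq_zero (hx : ∑ j, x j = 0) :
    (∑ j, x j ^ 3) ^ 2 ≤
      ((card ι : ℝ) - 2) ^ 2 / (card ι * (card ι - 1)) * (∑ j, x j ^ 2) ^ 3 := by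
  rcases le_or_gt (card ι) 1 with hle | hlt
  · have : Subsingleton ι := card_le_one_iff_subsingleton.1 hle
    obtain rfl : x = 0 := funext fun j => by rw [← Fintype.sum_subsingleton x j, hx]; rfl
    simp
  set n : ℝ := card ι
  set S := ∑ j, x j ^ 2
  have hn : 0 < n * (n - 1) := by
    have : (2 : ℝ) ≤ n := Nat.ofNat_le_cast.2 hlt
    nlinarith
  set c := √(S / (n * (n - 1)))
  have hc : c ^ 2 = S / (n * (n - 1)) :=
    Real.sq_sqrt (div_nonneg (sum_nonneg fun j _ => sq_nonneg _) hn.le)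
  have hS : S = n * (n - 1) * c ^ 2 := by rw [hc, mul_div_cancel₀ _ hn.ne']
  have hupper := sum_cube_le_of_sum_eq_zero hx (Real.sqrt_nonneg _) hS
  have hlower := sum_cube_le_of_sum_eq_zero (x := -x) (c := c) (by simp [hx]) (Real.sqrt_nonneg _)
    (by simpa using hS)
  simp only [Pi.neg_apply, Odd.neg_pow (by decide : Odd 3), neg_sq, sum_neg_distrib] at hlower
  calc (∑ j, x j ^ 3) ^ 2 ≤ ((n - 2) * c * S) ^ 2 := sq_le_sq' (by linarith) hupper
    _ = (n - 2) ^ 2 / (n * (n - 1)) * S ^ 3 := by rw [mul_pow, mul_pow, hc]; ring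

end SumZero

theorem Matrix.IsHermitian.trace_pow_eq_sum_eigenvalues_pow {𝕜 n : Type*} [RCLike 𝕜] [Fintype n]
    [DecidableEq n] {A : Matrix n n 𝕜} (hA : A.IsHermitian) (k : ℕ) :
    (A ^ k).trace = ∑ i, (hA.eigenvalues i : 𝕜) ^ k := by
  conv_lhs => rw [hA.spectral_theorem, ← map_pow, diagonal_pow, Unitary.conjStarAlgAut_apply,
    trace_mul_cycle, Unitary.coe_star_mul_self, one_mul, trace_diagonal]
  simp

theorem trace_cube_sq_le_of_traceless_general (n : ℕ)
    (σ : Matrix (Fin n) (Fin n) ℝ) (hσ : σ.IsSymm) (htr : σ.trace = 0) :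
    ((σ * σ * σ).trace) ^ 2 ≤
      ((n : ℝ) - 2) ^ 2 / ((n : ℝ) * ((n : ℝ) - 1)) * ((σ * σ).trace) ^ 3 := by
  have hσH : σ.IsHermitian := Matrix.isHermitian_iff_isSymm.2 hσ
  have htrace (k : ℕ) : (σ ^ k).trace = ∑ i, hσH.eigenvalues i ^ k := by
    simpa using hσH.trace_pow_eq_sum_eigenvalues_pow k
  have hsum : ∑ i, hσH.eigenvalues i = 0 := by simpa [htr] using (htrace 1).symm
  rw [← sq, ← pow_succ, htrace, htrace]
  simpa using sq_sum_cube_le_of_sum_eq_zero hsum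

theorem trace_cube_sq_le_of_traceless (n : ℕ) (hn : 2 ≤ n)
    (σ : Matrix (Fin n) (Fin n) ℝ) (hσ : σ.IsSymm) (htr : σ.trace = 0) :
    ((σ * σ * σ).trace) ^ 2 ≤
      ((n : ℝ) - 2) ^ 2 / ((n : ℝ) * ((n : ℝ) - 1)) * ((σ * σ).trace) ^ 3 :=
  trace_cube_sq_le_of_traceless_general n σ hσ htr
end

section
/- Let M : ℝ → Matrix (Fin n) (Fin n) ℝ be a differentiable matrix-valued function satisfying M'(t) = κ(t) − M(t)², where κ(t) is symmetric positive semidefinite for all t and M(0) is symmetric positive definite, and suppose M(t) remains symmetric for all t. Then det(M(t)) > 0 for all t ≥ 0. -/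
/-!
Suppose `M t` fails to be positive definite for some `t ≥ 0`. By compactness of the unit sphere
there is a first time `s` and a unit vector `v` with `vᵀ M(s) v ≤ 0`; on `[0, s)` the matrix `M`
is positive definite. For a positive semidefinite `A` we have `A ≤ (tr A) • 1`, hence
`A² ≤ (tr A) • A`, so along the Riccati flow `g(t) = vᵀ M(t) v` satisfies
`g' = vᵀ κ v - vᵀ M² v ≥ -C g`, where `C` bounds `tr M` on `[0, s]`. Grönwall's argument
(`e^{Ct} g(t)` is nondecreasing) then gives `g(s) > 0` from `g(0) > 0`, a contradiction.
Positive definiteness of `M t` yields `det (M t) > 0`.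
-/

open Set Matrix Real

lemma mul_self_le_smul_of_le_algebraMap {A : Type*} [PartialOrder A] [Ring A] [StarRing A]
    [TopologicalSpace A] [StarOrderedRing A] [Algebra ℝ A]
    [ContinuousFunctionalCalculus ℝ A IsSelfAdjoint] [NonnegSpectrumClass ℝ A]
    [IsSemitopologicalRing A] [T2Space A] {a : A} {c : ℝ} (ha : 0 ≤ a)
    (hc : a ≤ algebraMap ℝ A c) : a * a ≤ c • a := by
  set s := CFC.sqrt a
  have hss : s * s = a := CFC.sqrt_mul_sqrt_self a ha
  have key := conjugate_le_conjugate_of_nonneg hc (CFC.sqrt_nonneg a)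
  rw [Algebra.algebraMap_eq_smul_one, mul_smul_comm, mul_one, smul_mul_assoc, hss] at key
  calc a * a = s * (s * s) * s := by rw [← hss]; noncomm_ring
    _ ≤ c • a := by rwa [hss]

lemma pos_of_hasDerivAt_ge_neg_mul {g g' : ℝ → ℝ} {a b C : ℝ} (hab : a ≤ b)
    (hg : ContinuousOn g (Icc a b)) (hg' : ∀ x ∈ Ioo a b, HasDerivAt g (g' x) x)
    (hbound : ∀ x ∈ Ioo a b, -C * g x ≤ g' x) (ha : 0 < g a) : 0 < g b := by
  have hmono : MonotoneOn (fun x => exp (C * x) * g x) (Icc a b) := by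
    refine monotoneOn_of_hasDerivWithinAt_nonneg (convex_Icc a b)
      ((continuous_const.mul continuous_id).rexp.continuousOn.mul hg)
      (f' := fun x => exp (C * x) * (C * g x + g' x)) (fun x hx => ?_) (fun x hx => ?_)
      <;> rw [interior_Icc] at hx
    · have hexp : HasDerivAt (fun y => exp (C * y)) (exp (C * x) * C) x := by
        simpa using ((hasDerivAt_id x).const_mul C).exp
      exact (hexp.mul (hg' x hx)).hasDerivWithinAt.congr_deriv (by ring)
    · exact mul_nonneg (exp_pos _).le (by linarith [hbound x hx])
  have hab' := hmono (left_mem_Icc.2 hab) (right_mem_Icc.2 hab) hab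
  exact pos_of_mul_pos_right ((mul_pos (exp_pos _) ha).trans_le hab') (exp_pos _).le

lemma exists_first_hitting_time {X : Type*} [TopologicalSpace X] {K : Set X} (hK : IsCompact K)
    {Q : ℝ → X → ℝ} (hQ : Continuous (Function.uncurry Q)) {a b : ℝ} (hab : a ≤ b) {x : X}
    (hx : x ∈ K) (hQx : Q b x ≤ 0) :
    ∃ s ∈ Icc a b, (∃ y ∈ K, Q s y ≤ 0) ∧ ∀ τ ∈ Ico a s, ∀ y ∈ K, 0 < Q τ y := by
  set S := Prod.fst '' (Icc a b ×ˢ K ∩ {p | Function.uncurry Q p ≤ 0})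
  have hS : IsCompact S :=
    ((isCompact_Icc.prod hK).inter_right (isClosed_le hQ continuous_const)).image continuous_fst
  obtain ⟨s, ⟨⟨s, y⟩, ⟨⟨hs, hy⟩, hQy⟩, rfl⟩, hleast⟩ :=
    hS.exists_isLeast ⟨b, (b, x), ⟨⟨right_mem_Icc.2 hab, hx⟩, hQx⟩, rfl⟩
  refine ⟨s, hs, ⟨y, hy, hQy⟩, fun τ hτ z hz => ?_⟩
  by_contra! hQz
  exact hτ.2.not_ge (hleast ⟨(τ, z), ⟨⟨⟨hτ.1, hτ.2.le.trans hs.2⟩, hz⟩, hQz⟩, rfl⟩)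

namespace Matrix

lemma continuous_of_forall_hasDerivAt_apply {m n : Type*} {M M' : ℝ → Matrix m n ℝ}
    (h : ∀ t i j, HasDerivAt (fun s => M s i j) (M' t i j) t) : Continuous M :=
  continuous_pi fun i => continuous_pi fun j =>
    continuous_iff_continuousAt.2 fun t => (h t i j).continuousAt

variable {m n : Type*} [Fintype m] [Fintype n]

lemma posDef_of_forall_mem_sphere {A : Matrix n n ℝ} (hA : A.IsHermitian)
    (h : ∀ v ∈ Metric.sphere (0 : n → ℝ) 1, 0 < v ⬝ᵥ A *ᵥ v) : A.PosDef := by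
  refine PosDef.of_dotProduct_mulVec_pos hA fun x hx => ?_
  have hnorm : 0 < ‖x‖⁻¹ := inv_pos.2 (norm_pos_iff.2 hx)
  have hu : ‖x‖⁻¹ • x ∈ Metric.sphere (0 : n → ℝ) 1 := by
    rw [mem_sphere_zero_iff_norm, norm_smul, norm_inv, norm_norm, inv_mul_cancel₀ (by simpa)]
  have hQu := h _ hu
  rw [mulVec_smul, dotProduct_smul, smul_dotProduct, smul_eq_mul, smul_eq_mul] at hQu
  exact pos_of_mul_pos_right (pos_of_mul_pos_right hQu hnorm.le) hnorm.le

lemma hasDerivAt_dotProduct_mulVec {M : ℝ → Matrix m n ℝ} {M' : Matrix m n ℝ} {t : ℝ}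
    (h : ∀ i j, HasDerivAt (fun s => M s i j) (M' i j) t) (u : m → ℝ) (v : n → ℝ) :
    HasDerivAt (fun s => u ⬝ᵥ M s *ᵥ v) (u ⬝ᵥ M' *ᵥ v) t := by
  simp only [dotProduct, mulVec]
  exact HasDerivAt.fun_sum fun i _ => HasDerivAt.const_mul _ <|
    HasDerivAt.fun_sum fun j _ => (h i j).mul_const _

variable [DecidableEq n]

open scoped MatrixOrder in
lemma PosSemidef.le_algebraMap_trace {A : Matrix n n ℝ} (hA : A.PosSemidef) :
    A ≤ algebraMap ℝ _ A.trace := by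
  refine le_algebraMap_of_spectrum_le (fun x hx => ?_) hA.isHermitian
  obtain ⟨i, rfl⟩ := hA.isHermitian.spectrum_real_eq_range_eigenvalues ▸ hx
  rw [hA.isHermitian.trace_eq_sum_eigenvalues]
  exact Finset.single_le_sum (fun j _ => hA.eigenvalues_nonneg j) (Finset.mem_univ i)

open scoped MatrixOrder in
lemma PosSemidef.neg_trace_mul_le_dotProduct_sub_mul_self_mulVec {A K : Matrix n n ℝ}
    (hA : A.PosSemidef) (hK : K.PosSemidef) (v : n → ℝ) :
    -(A.trace * (v ⬝ᵥ A *ᵥ v)) ≤ v ⬝ᵥ (K - A * A) *ᵥ v := by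
  have hA2 := (le_iff.1 (mul_self_le_smul_of_le_algebraMap (nonneg_iff_posSemidef.2 hA)
    hA.le_algebraMap_trace)).dotProduct_mulVec_nonneg v
  have hKv := hK.dotProduct_mulVec_nonneg v
  simp only [star_trivial, sub_mulVec, smul_mulVec, dotProduct_sub, dotProduct_smul,
    smul_eq_mul] at hA2 hKv ⊢
  linarith

lemma riccati_dotProduct_mulVec_pos {M κ : ℝ → Matrix n n ℝ}
    (hderiv : ∀ t i j, HasDerivAt (fun s => M s i j) ((κ t - M t * M t) i j) t)
    {a b : ℝ} (hab : a ≤ b) (hκ : ∀ t ∈ Ioo a b, (κ t).PosSemidef)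
    (hM : ∀ t ∈ Ioo a b, (M t).PosSemidef) {v : n → ℝ} (ha : 0 < v ⬝ᵥ M a *ᵥ v) :
    0 < v ⬝ᵥ M b *ᵥ v := by
  have hMc := continuous_of_forall_hasDerivAt_apply hderiv
  obtain ⟨C, hC⟩ := isCompact_Icc.exists_bound_of_continuousOn
    (hMc.matrix_trace.continuousOn (s := Icc a b))
  refine pos_of_hasDerivAt_ge_neg_mul (C := C) hab (by fun_prop)
    (fun t _ => hasDerivAt_dotProduct_mulVec (hderiv t) v v) (fun t ht => ?_) ha
  have hg : 0 ≤ v ⬝ᵥ M t *ᵥ v := by simpa using (hM t ht).dotProduct_mulVec_nonneg v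
  have htr : (M t).trace ≤ C := (abs_le.1 (hC t (Ioo_subset_Icc_self ht))).2
  calc -C * (v ⬝ᵥ M t *ᵥ v) ≤ -((M t).trace * (v ⬝ᵥ M t *ᵥ v)) := by nlinarith
    _ ≤ v ⬝ᵥ (κ t - M t * M t) *ᵥ v :=
      (hM t ht).neg_trace_mul_le_dotProduct_sub_mul_self_mulVec (hκ t ht) v

end Matrix

theorem riccati_det_pos (n : ℕ) (M κ : ℝ → Matrix (Fin n) (Fin n) ℝ)
    (hderiv : ∀ t, ∀ i j, HasDerivAt (fun s => M s i j) ((κ t - M t * M t) i j) t)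
    (hκ : ∀ t, (κ t).PosSemidef) (hM0 : (M 0).PosDef)
    (hsymm : ∀ t, (M t).IsSymm) :
    ∀ t ≥ (0 : ℝ), 0 < (M t).det := by
  have hQ : Continuous (Function.uncurry fun t (v : Fin n → ℝ) => v ⬝ᵥ M t *ᵥ v) :=
    have hM := continuous_of_forall_hasDerivAt_apply hderiv
    continuous_snd.dotProduct ((hM.comp continuous_fst).matrix_mulVec continuous_snd)
  intro t ht
  refine (posDef_of_forall_mem_sphere (hsymm t) ?_).det_pos
  by_contra! ⟨v, hv, hQv⟩
  obtain ⟨s, hs, ⟨w, hw, hQw⟩, hbefore⟩ :=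
    exists_first_hitting_time (isCompact_sphere 0 1) hQ ht hv hQv
  have hw0 : w ≠ 0 := ne_zero_of_mem_sphere one_ne_zero ⟨w, hw⟩
  refine hQw.not_gt (riccati_dotProduct_mulVec_pos hderiv hs.1 (fun τ _ => hκ τ)
    (fun τ hτ => (posDef_of_forall_mem_sphere (hsymm τ)
      (hbefore τ (Ioo_subset_Ico_self hτ))).posSemidef) ?_)
  simpa using hM0.dotProduct_mulVec_pos hw0
end

section
/- For any matrix M(t) satisfying the Riccati equation M' = κ − M² with κ symmetric positive semidefinite, the function t ↦ exp(∫₀ᵗ trace(M(s)) ds) · det(M(t)) is nondecreasing in t. -/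
/-!
Write `D t = det M(t)`. Jacobi's formula and the Riccati equation give
`D' = tr(adj M · (κ - M²)) = tr(adj M · κ) - D · tr M`, because `adj M · M = D · 1`.
Hence `(exp(∫₀ᵗ tr M) · D)' = exp(∫₀ᵗ tr M) · tr(adj M · κ)`, and this is nonnegative:
`adj M = D · M⁻¹` is positive definite and the trace of a product of two positive
semidefinite matrices is nonnegative.
-/

open Matrix

namespace Matrix

section Adjugate

variable {ι R : Type*} [Fintype ι] [DecidableEq ι] [CommRing R]

theorem det_updateRow_eq_sum_adjugate_mul (A : Matrix ι ι R) (j : ι) (v : ι → R) :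
    (A.updateRow j v).det = ∑ k, adjugate A k j * v k := by
  rw [← cramer_transpose_apply, cramer_eq_adjugate_mulVec, ← adjugate_transpose]
  simp [mulVec, dotProduct]

theorem trace_adjugate_mul (A B : Matrix ι ι R) :
    (adjugate A * B).trace = ∑ j, (A.updateRow j (B j)).det := by
  simp only [det_updateRow_eq_sum_adjugate_mul, trace, diag, mul_apply]
  exact Finset.sum_comm

theorem trace_adjugate_mul_sub_mul_self (A K : Matrix ι ι R) :
    (adjugate A * (K - A * A)).trace = (adjugate A * K).trace - A.trace * A.det := by
  rw [Matrix.mul_sub, ← Matrix.mul_assoc, adjugate_mul, smul_mul, Matrix.one_mul, trace_sub,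
    trace_smul, smul_eq_mul, mul_comm]

end Adjugate

section Jacobi

variable {ι 𝕜 : Type*} [Fintype ι] [DecidableEq ι] [NontriviallyNormedField 𝕜]

def detRowContinuousMultilinear : ContinuousMultilinearMap 𝕜 (fun _ : ι ↦ ι → 𝕜) 𝕜 where
  toMultilinearMap := (detRowAlternating : (ι → 𝕜) [⋀^ι]→ₗ[𝕜] 𝕜).toMultilinearMap
  cont := continuous_id.matrix_det

theorem hasDerivAt_det {A : 𝕜 → Matrix ι ι 𝕜} {A' : Matrix ι ι 𝕜} {t : 𝕜}
    (hA : ∀ i j, HasDerivAt (fun s ↦ A s i j) (A' i j) t) :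
    HasDerivAt (fun s ↦ (A s).det) (adjugate (A t) * A').trace t := by
  have hrows : HasDerivAt (fun s ↦ of.symm (A s)) (of.symm A') t :=
    hasDerivAt_pi.2 fun i ↦ hasDerivAt_pi.2 (hA i)
  refine ((detRowContinuousMultilinear.hasFDerivAt (of.symm (A t))).comp_hasDerivAt t
    hrows).congr_deriv ?_
  rw [ContinuousMultilinearMap.linearDeriv_apply, trace_adjugate_mul]
  rfl

end Jacobi

section Positivity

open scoped ComplexOrder MatrixOrder

variable {ι 𝕜 : Type*} [Fintype ι] [DecidableEq ι] [RCLike 𝕜]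

theorem PosSemidef.trace_mul_nonneg {A B : Matrix ι ι 𝕜} (hA : A.PosSemidef)
    (hB : B.PosSemidef) : 0 ≤ (A * B).trace := by
  obtain ⟨C, rfl⟩ := CStarAlgebra.nonneg_iff_eq_star_mul_self.mp hA.nonneg
  rw [Matrix.mul_assoc, trace_mul_comm]
  exact (hB.mul_mul_conjTranspose_same C).trace_nonneg

theorem PosDef.adjugate {A : Matrix ι ι 𝕜} (hA : A.PosDef) : A.adjugate.PosDef := by
  have hdet := hA.det_pos
  have hadj : A.adjugate = A.det • A⁻¹ := by
    rw [Matrix.inv_def, smul_smul, Ring.inverse_eq_inv', mul_inv_cancel₀ hdet.ne', one_smul]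
  rw [hadj]
  exact hA.inv.smul hdet

end Positivity

end Matrix

theorem monotone_exp_integral_mul_of_hasDerivAt {f a g : ℝ → ℝ} (ha : Continuous a)
    (hf : ∀ t, HasDerivAt f (g t - a t * f t) t) (hg : ∀ t, 0 ≤ g t) :
    Monotone fun t ↦ Real.exp (∫ s in (0 : ℝ)..t, a s) * f t := by
  have hderiv : ∀ t, HasDerivAt (fun t ↦ Real.exp (∫ s in (0 : ℝ)..t, a s) * f t)
      (Real.exp (∫ s in (0 : ℝ)..t, a s) * g t) t := fun t ↦
    (((ha.integral_hasStrictDerivAt 0 t).hasDerivAt.exp).mul (hf t)).congr_deriv (by ring)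
  refine monotone_of_deriv_nonneg (fun t ↦ (hderiv t).differentiableAt) fun t ↦ ?_
  rw [(hderiv t).deriv]
  exact mul_nonneg (Real.exp_nonneg _) (hg t)

theorem riccati_exp_trace_det_monotone (n : ℕ) (M κ : ℝ → Matrix (Fin n) (Fin n) ℝ)
    (hderiv : ∀ t, ∀ i j, HasDerivAt (fun s => M s i j) ((κ t - M t * M t) i j) t)
    (hκ : ∀ t, (κ t).PosSemidef) (hM : ∀ t, (M t).PosDef) :
    Monotone (fun t => Real.exp (∫ s in (0:ℝ)..t, (M s).trace) * (M t).det) := by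
  have htrace : Continuous fun s ↦ (M s).trace :=
    continuous_finsetSum _ fun i _ ↦
      continuous_iff_continuousAt.2 fun t ↦ (hderiv t i i).continuousAt
  refine monotone_exp_integral_mul_of_hasDerivAt (g := fun t ↦ (adjugate (M t) * κ t).trace)
    htrace (fun t ↦ ?_) (fun t ↦ (hM t).adjugate.posSemidef.trace_mul_nonneg (hκ t))
  rw [← trace_adjugate_mul_sub_mul_self]
  exact hasDerivAt_det (hderiv t)
end

section
/- Let j₁, j₂ : [0,T] → ℝ be solutions of j''ᵢ(t) = κᵢ(t)·jᵢ(t) with jᵢ(0) = 0, jᵢ'(0) = 1, where κ₁, κ₂ are continuous, and suppose j₁, j₂ > 0 on (0,T]. Let j_av solve j_av'' = ((κ₁+κ₂)/2)·j_av with the same initial conditions and j_av > 0 on (0,T]. Then for all t ∈ (0,T]: 2·j_av'(t)/j_av(t) ≥ j₁'(t)/j₁(t) + j₂'(t)/j₂(t). -/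
/-!
Write `uᵢ = dᵢ / jᵢ` and `w = dav / jav`; these solve the Riccati equations `u' = κ - u²`.
The function `G = jav² (2 w - u₁ - u₂)` then has derivative
`jav² ((w - u₁)² + (w - u₂)²) ≥ 0`, because the curvature terms cancel for the averaged
schedule, and `G → 0` at `0⁺` since `jav(0) = 0` while `jᵢ(s) / s → 1`. Hence `G ≥ 0` on `(0, T]`.
-/

open Filter Set Topology

theorem HasDerivAt.tendsto_div_self_nhdsGT_zero {f : ℝ → ℝ} {f' : ℝ}
    (hf : HasDerivAt f f' 0) (hf0 : f 0 = 0) : Tendsto (fun a => f a / a) (𝓝[>] 0) (𝓝 f') := by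
  simpa [hf0, div_eq_inv_mul] using hf.tendsto_slope_zero_right

theorem le_of_tendsto_nhdsGT_of_hasDerivAt_nonneg {G G' : ℝ → ℝ} {a b c : ℝ} (hab : a < b)
    (hG : ∀ s ∈ Ioc a b, HasDerivAt G (G' s) s) (hG' : ∀ s ∈ Ioc a b, 0 ≤ G' s)
    (hlim : Tendsto G (𝓝[>] a) (𝓝 c)) : c ≤ G b := by
  have hmono : MonotoneOn G (Ioc a b) := by
    refine monotoneOn_of_hasDerivWithinAt_nonneg (f' := G') (convex_Ioc a b)
      (fun s hs => (hG s hs).continuousAt.continuousWithinAt) (fun s hs => ?_) (fun s hs => ?_)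
    · exact (hG s (interior_subset hs)).hasDerivWithinAt
    · exact hG' s (interior_subset hs)
  refine le_of_tendsto hlim ?_
  filter_upwards [Ioc_mem_nhdsGT hab] with s hs
  exact hmono hs (right_mem_Ioc.2 hab) hs.2

/-- `y² (e / y - d / j)`, written so that it stays smooth where `y` vanishes. -/
noncomputable def weightedLogDerivGap (j d y e : ℝ → ℝ) (s : ℝ) : ℝ :=
  e s * y s - d s / j s * y s ^ 2

section Jacobi

variable {j d y e κ μ : ℝ → ℝ}

theorem hasDerivAt_weightedLogDerivGap {s : ℝ} (hj : HasDerivAt j (d s) s)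
    (hd : HasDerivAt d (κ s * j s) s) (hy : HasDerivAt y (e s) s)
    (he : HasDerivAt e (μ s * y s) s) (hjs : j s ≠ 0) :
    HasDerivAt (weightedLogDerivGap j d y e)
      ((e s - d s / j s * y s) ^ 2 + (μ s - κ s) * y s ^ 2) s := by
  refine ((he.mul hy).sub ((hd.div hj hjs).mul (hy.pow 2))).congr_deriv ?_
  simp only [Pi.pow_apply, Pi.div_apply]
  field_simp
  ring

theorem tendsto_weightedLogDerivGap_nhdsGT_zero (hj : HasDerivAt j (d 0) 0)
    (hd : ContinuousAt d 0) (hy : HasDerivAt y (e 0) 0) (he : ContinuousAt e 0)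
    (hj0 : j 0 = 0) (hy0 : y 0 = 0) (hd0 : d 0 ≠ 0) :
    Tendsto (weightedLogDerivGap j d y e) (𝓝[>] 0) (𝓝 0) := by
  have hd' := hd.tendsto.mono_left (nhdsWithin_le_nhds (s := Ioi 0))
  have he' := he.tendsto.mono_left (nhdsWithin_le_nhds (s := Ioi 0))
  have hy' := hy.continuousAt.tendsto.mono_left (nhdsWithin_le_nhds (s := Ioi 0))
  have hid : Tendsto (fun a : ℝ => a) (𝓝[>] 0) (𝓝 0) :=
    tendsto_id.mono_left nhdsWithin_le_nhds
  have hlim : Tendsto (fun a => e a * y a - d a * (y a / a) ^ 2 / (j a / a) * a) (𝓝[>] 0)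
      (𝓝 (e 0 * y 0 - d 0 * e 0 ^ 2 / d 0 * 0)) :=
    (he'.mul hy').sub ((((hd'.mul ((hy.tendsto_div_self_nhdsGT_zero hy0).pow 2)).div
      (hj.tendsto_div_self_nhdsGT_zero hj0) hd0)).mul hid)
  rw [hy0, mul_zero, mul_zero, sub_zero] at hlim
  refine hlim.congr' ?_
  filter_upwards [self_mem_nhdsWithin] with a (ha : 0 < a)
  simp only [weightedLogDerivGap]
  field_simp

end Jacobi

theorem multiplicative_lemma_log_deriv_general (T : ℝ)
    (κ₁ κ₂ : ℝ → ℝ)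
    (j₁ j₂ jav d₁ d₂ dav : ℝ → ℝ)
    (hj₁ : ∀ t, HasDerivAt j₁ (d₁ t) t) (hd₁ : ∀ t, HasDerivAt d₁ (κ₁ t * j₁ t) t)
    (hj₂ : ∀ t, HasDerivAt j₂ (d₂ t) t) (hd₂ : ∀ t, HasDerivAt d₂ (κ₂ t * j₂ t) t)
    (hjav : ∀ t, HasDerivAt jav (dav t) t)
    (hdav : ∀ t, HasDerivAt dav ((κ₁ t + κ₂ t) / 2 * jav t) t)
    (h₁0 : j₁ 0 = 0) (h₂0 : j₂ 0 = 0) (hav0 : jav 0 = 0)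
    (h₁0' : d₁ 0 = 1) (h₂0' : d₂ 0 = 1)
    (hpos₁ : ∀ t ∈ Set.Ioc (0 : ℝ) T, 0 < j₁ t)
    (hpos₂ : ∀ t ∈ Set.Ioc (0 : ℝ) T, 0 < j₂ t)
    (hposav : ∀ t ∈ Set.Ioc (0 : ℝ) T, 0 < jav t) :
    ∀ t ∈ Set.Ioc (0 : ℝ) T, 2 * dav t / jav t ≥ d₁ t / j₁ t + d₂ t / j₂ t := by
  rintro t ⟨ht0, htT⟩
  set G := weightedLogDerivGap j₁ d₁ jav dav + weightedLogDerivGap j₂ d₂ jav dav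
  have hG : ∀ s ∈ Ioc 0 t, HasDerivAt G
      ((dav s - d₁ s / j₁ s * jav s) ^ 2 + (dav s - d₂ s / j₂ s * jav s) ^ 2) s := by
    rintro s ⟨hs0, hst⟩
    have hs : s ∈ Ioc 0 T := ⟨hs0, hst.trans htT⟩
    have h₁ := hasDerivAt_weightedLogDerivGap (μ := fun s => (κ₁ s + κ₂ s) / 2)
      (hj₁ s) (hd₁ s) (hjav s) (hdav s) (hpos₁ s hs).ne'
    have h₂ := hasDerivAt_weightedLogDerivGap (μ := fun s => (κ₁ s + κ₂ s) / 2)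
      (hj₂ s) (hd₂ s) (hjav s) (hdav s) (hpos₂ s hs).ne'
    exact (h₁.add h₂).congr_deriv (by ring)
  have hlim : Tendsto G (𝓝[>] 0) (𝓝 (0 + 0)) :=
    (tendsto_weightedLogDerivGap_nhdsGT_zero (hj₁ 0) (hd₁ 0).continuousAt (hjav 0)
      (hdav 0).continuousAt h₁0 hav0 (by simp [h₁0'])).add
    (tendsto_weightedLogDerivGap_nhdsGT_zero (hj₂ 0) (hd₂ 0).continuousAt (hjav 0)
      (hdav 0).continuousAt h₂0 hav0 (by simp [h₂0']))
  have hGt : 0 + 0 ≤ G t :=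
    le_of_tendsto_nhdsGT_of_hasDerivAt_nonneg ht0 hG (fun _ _ => by positivity) hlim
  have hjt := hposav t ⟨ht0, htT⟩
  simp only [G, Pi.add_apply, weightedLogDerivGap] at hGt
  rw [ge_iff_le, le_div_iff₀ hjt, ← mul_le_mul_iff_of_pos_right hjt]
  linarith

theorem multiplicative_lemma_log_deriv (T : ℝ) (hT : 0 < T)
    (κ₁ κ₂ : ℝ → ℝ) (hκ₁ : Continuous κ₁) (hκ₂ : Continuous κ₂)
    (j₁ j₂ jav d₁ d₂ dav : ℝ → ℝ)
    (hj₁ : ∀ t, HasDerivAt j₁ (d₁ t) t) (hd₁ : ∀ t, HasDerivAt d₁ (κ₁ t * j₁ t) t)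
    (hj₂ : ∀ t, HasDerivAt j₂ (d₂ t) t) (hd₂ : ∀ t, HasDerivAt d₂ (κ₂ t * j₂ t) t)
    (hjav : ∀ t, HasDerivAt jav (dav t) t)
    (hdav : ∀ t, HasDerivAt dav ((κ₁ t + κ₂ t) / 2 * jav t) t)
    (h₁0 : j₁ 0 = 0) (h₂0 : j₂ 0 = 0) (hav0 : jav 0 = 0)
    (h₁0' : d₁ 0 = 1) (h₂0' : d₂ 0 = 1) (hav0' : dav 0 = 1)
    (hpos₁ : ∀ t ∈ Set.Ioc (0 : ℝ) T, 0 < j₁ t)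
    (hpos₂ : ∀ t ∈ Set.Ioc (0 : ℝ) T, 0 < j₂ t)
    (hposav : ∀ t ∈ Set.Ioc (0 : ℝ) T, 0 < jav t) :
    ∀ t ∈ Set.Ioc (0 : ℝ) T, 2 * dav t / jav t ≥ d₁ t / j₁ t + d₂ t / j₂ t :=
  multiplicative_lemma_log_deriv_general T κ₁ κ₂ j₁ j₂ jav d₁ d₂ dav hj₁ hd₁ hj₂ hd₂ hjav hdav h₁0
    h₂0 hav0 h₁0' h₂0' hpos₁ hpos₂ hposav
end

section
/- Let j₁, j₂, j_av be as in the multiplicative shuffling lemma with κ₁(0) ≠ κ₂(0). Then 2·j_av'(t)/j_av(t) − j₁'(t)/j₁(t) − j₂'(t)/j₂(t) = (1/45)·(κ₁(0)² + κ₂(0)² − 2·((κ₁(0)+κ₂(0))/2)²)·t³ + o(t³) as t → 0⁺, and in particular this quantity is strictly positive for small t > 0. -/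
set_option maxHeartbeats 4000000
set_option maxRecDepth 100000
open Filter Asymptotics Set

local notation "L" => nhdsWithin (0:ℝ) (Set.Ioi 0)



lemma MLT.step {f f' : ℝ → ℝ} (hf : ∀ t, HasDerivAt f (f' t) t) (h0 : f 0 = 0)
    {n : ℕ} (h : f' =o[L] fun t => t ^ n) :
    f =o[L] fun t => t ^ (n + 1) := by
  rw [isLittleO_iff] at h ⊢
  intro ε hε
  obtain ⟨s, hs, hbound⟩ := eventually_iff_exists_mem.mp (h hε)
  obtain ⟨δ, hδ0, hδ⟩ := (mem_nhdsGT_iff_exists_Ioc_subset).mp hs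
  filter_upwards [Ioc_mem_nhdsGT_of_mem (by exact ⟨le_refl 0, hδ0⟩ : (0:ℝ) ∈ Ico 0 δ)] with t ht
  obtain ⟨ht0, htδ⟩ := ht
  obtain ⟨c, hc, hceq⟩ := exists_hasDerivAt_eq_slope f f' ht0
    (fun x _ => (hf x).continuousAt.continuousWithinAt) (fun x _ => hf x)
  have hcs : c ∈ s := hδ ⟨hc.1, le_trans hc.2.le htδ⟩
  have h1 : f t = f' c * t := by
    have := hceq
    field_simp [h0] at this
    rw [h0, sub_zero, sub_zero] at this
    rw [this]
  rw [h1]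
  have hb := hbound c hcs
  have hcn : ‖(c:ℝ)^n‖ ≤ ‖t^n‖ := by
    simp only [Real.norm_eq_abs, abs_pow]
    exact pow_le_pow_left₀ (abs_nonneg c) (by rw [abs_of_pos hc.1, abs_of_pos ht0]; exact hc.2.le) n
  calc ‖f' c * t‖ = ‖f' c‖ * ‖t‖ := norm_mul _ _
    _ ≤ (ε * ‖t^n‖) * ‖t‖ := by
        apply mul_le_mul_of_nonneg_right _ (norm_nonneg t)
        exact le_trans hb (mul_le_mul_of_nonneg_left hcn hε.le)
    _ = ε * ‖t^(n+1)‖ := by rw [pow_succ, norm_mul]; ring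

lemma MLT.pow_isBigO {m n : ℕ} (h : n ≤ m) : (fun t : ℝ => t ^ m) =O[L] fun t => t ^ n := by
  rw [isBigO_iff]
  refine ⟨1, ?_⟩
  filter_upwards [Ioc_mem_nhdsGT_of_mem (by exact ⟨le_refl 0, one_pos⟩ : (0:ℝ) ∈ Ico 0 1)] with t ht
  simp only [Real.norm_eq_abs, abs_pow, one_mul]
  exact pow_le_pow_of_le_one (abs_nonneg t) (by rw [abs_of_pos ht.1]; exact ht.2) h

lemma MLT.mono {f : ℝ → ℝ} {m n : ℕ} (h : f =o[L] fun t => t ^ m) (hmn : n ≤ m) :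
    f =o[L] fun t => t ^ n := h.trans_isBigO (MLT.pow_isBigO hmn)

-- c * t^m = o(t^n) for n < m
lemma MLT.monomial (c : ℝ) {m n : ℕ} (h : n < m) :
    (fun t : ℝ => c * t ^ m) =o[L] fun t => t ^ n := by
  have h1 : (fun t : ℝ => t ^ m) =o[nhds (0:ℝ)] fun t => t ^ n :=
    isLittleO_pow_pow h
  exact ((h1.mono nhdsWithin_le_nhds).const_mul_left c)


lemma MLT.kappa_exp {κ : ℝ → ℝ} (hκ : ContDiff ℝ ((⊤:ℕ∞) : WithTop ℕ∞) κ) :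
    (fun t => κ t - (κ 0 + deriv κ 0 * t + (deriv (deriv κ) 0 / 2) * t ^ 2))
      =o[L] fun t => t ^ 2 := by
  have hd1 : Differentiable ℝ κ := hκ.differentiable (by simp)
  have hκ' := (contDiff_infty_iff_deriv.mp hκ).2
  have hd2 : Differentiable ℝ (deriv κ) := hκ'.differentiable (by simp)
  have hc3 : Continuous (deriv (deriv κ)) := (contDiff_infty_iff_deriv.mp hκ').2.continuous
  have g2 : (fun t => deriv (deriv κ) t - deriv (deriv κ) 0) =o[L] fun t : ℝ => t ^ 0 := by
    simp only [pow_zero]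
    rw [isLittleO_one_iff]
    have : Filter.Tendsto (fun t => deriv (deriv κ) t - deriv (deriv κ) 0) (nhds 0) (nhds 0) := by
      have := (hc3.tendsto 0).sub_const (deriv (deriv κ) 0)
      simpa using this
    exact this.mono_left nhdsWithin_le_nhds
  have g1 : (fun t => deriv κ t - (deriv κ 0 + deriv (deriv κ) 0 * t)) =o[L] fun t : ℝ => t ^ 1 := by
    refine MLT.step (f' := fun t => deriv (deriv κ) t - deriv (deriv κ) 0) ?_ (by simp) g2
    intro t
    have h1 : HasDerivAt (deriv κ) (deriv (deriv κ) t) t := (hd2 t).hasDerivAt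
    have h2 : HasDerivAt (fun t => deriv κ 0 + deriv (deriv κ) 0 * t)
        (deriv (deriv κ) 0) t := by
      simpa using ((hasDerivAt_id t).const_mul (deriv (deriv κ) 0)).const_add (deriv κ 0)
    exact h1.sub h2
  have g0 := MLT.step (f := fun t => κ t - (κ 0 + deriv κ 0 * t + (deriv (deriv κ) 0 / 2) * t ^ 2))
    (f' := fun t => deriv κ t - (deriv κ 0 + deriv (deriv κ) 0 * t)) ?_ (by simp) g1
  · exact g0
  · intro t
    have h1 : HasDerivAt κ (deriv κ t) t := (hd1 t).hasDerivAt
    have h2 : HasDerivAt (fun t => κ 0 + deriv κ 0 * t + (deriv (deriv κ) 0 / 2) * t ^ 2)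
        (deriv κ 0 + deriv (deriv κ) 0 * t) t := by
      have : HasDerivAt (fun t : ℝ => κ 0 + deriv κ 0 * t + (deriv (deriv κ) 0 / 2) * t ^ 2)
          (0 + deriv κ 0 * 1 + (deriv (deriv κ) 0 / 2) * (2 * t ^ 1)) t := by
        exact (((hasDerivAt_const t (κ 0)).add ((hasDerivAt_id t).const_mul (deriv κ 0))).add
          ((hasDerivAt_pow 2 t).const_mul (deriv (deriv κ) 0 / 2)))
      convert this using 1
      ring
    exact h1.sub h2

lemma MLT.olo_mul_obo {f g : ℝ → ℝ} {m n : ℕ} (hf : f =o[L] fun t => t ^ m)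
    (hg : g =O[L] fun t => t ^ n) : (fun t => f t * g t) =o[L] fun t => t ^ (m + n) := by
  simpa [pow_add] using hf.mul_isBigO hg

lemma MLT.obo_mul_olo {f g : ℝ → ℝ} {m n : ℕ} (hf : f =O[L] fun t => t ^ m)
    (hg : g =o[L] fun t => t ^ n) : (fun t => f t * g t) =o[L] fun t => t ^ (m + n) := by
  simpa [pow_add] using hf.mul_isLittleO hg

lemma MLT.tendsto_isLittleO_zero {f : ℝ → ℝ} (h : Tendsto f L (nhds 0)) :
    f =o[L] fun t : ℝ => t ^ 0 := by
  simp only [pow_zero]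
  exact (isLittleO_one_iff ℝ).mpr h

lemma MLT.ode_exp {κ j d : ℝ → ℝ} {A B E : ℝ}
    (hκ : (fun t => κ t - (A + B * t + E * t ^ 2)) =o[L] fun t => t ^ 2)
    (hj : ∀ t, HasDerivAt j (d t) t) (hd : ∀ t, HasDerivAt d (κ t * j t) t)
    (hj0 : j 0 = 0) (hd0 : d 0 = 1) :
    ((fun t => j t - (t + A/6 * t^3 + B/12 * t^4 + (E/20 + A^2/120) * t^5))
        =o[L] fun t => t^5) ∧
    ((fun t => d t - (1 + A/2 * t^2 + B/3 * t^3 + (E/4 + A^2/24) * t^4))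
        =o[L] fun t => t^4) ∧
    (j =O[L] fun t => t^1) ∧ (d =O[L] fun t => t^0) := by
  -- κ tends to A
  have hκA : Tendsto κ L (nhds A) := by
    have h1 : Tendsto (fun t => κ t - (A + B * t + E * t ^ 2)) L (nhds 0) := by
      have := (hκ.mono (le_refl L)).trans_isBigO (MLT.pow_isBigO (le_refl 2))
      have h2 := hκ.trans_isBigO (MLT.pow_isBigO (Nat.zero_le 2))
      simpa only [pow_zero] using (isLittleO_one_iff ℝ).mp (by simpa only [pow_zero] using h2)
    have h2 : Tendsto (fun t : ℝ => A + B * t + E * t ^ 2) L (nhds A) := by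
      have : Tendsto (fun t : ℝ => A + B * t + E * t ^ 2) (nhds 0) (nhds (A + B * 0 + E * 0 ^ 2)) := by
        exact (Continuous.tendsto (by fun_prop) 0)
      simpa using this.mono_left nhdsWithin_le_nhds
    have := h1.add h2
    simpa using this
  have hκO : κ =O[L] fun t : ℝ => t ^ 0 := by
    simpa only [pow_zero] using hκA.isBigO_one (F := ℝ)
  -- κ - A = o(1), κ - (A+Bt) = o(t)
  have hκ0 : (fun t => κ t - A) =o[L] fun t : ℝ => t ^ 0 :=
    MLT.tendsto_isLittleO_zero (by simpa using hκA.sub_const A)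
  have hκ1 : (fun t => κ t - (A + B * t)) =o[L] fun t : ℝ => t ^ 1 := by
    have heq : (fun t => κ t - (A + B * t)) =
        fun t => (κ t - (A + B * t + E * t ^ 2)) + E * t ^ 2 := by funext t; ring
    rw [heq]
    exact (MLT.mono hκ (by norm_num)).add (MLT.monomial E (by norm_num))
  -- d - 1 = o(1)
  have s0d : (fun t => d t - 1) =o[L] fun t : ℝ => t ^ 0 := by
    apply MLT.tendsto_isLittleO_zero
    have h1 : Tendsto d L (nhds 1) := by
      have := (hd 0).continuousAt.tendsto
      rw [hd0] at this
      exact this.mono_left nhdsWithin_le_nhds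
    simpa using h1.sub_const 1
  have hd1deriv : ∀ t, HasDerivAt (fun x => d x - 1) (κ t * j t) t :=
    fun t => (hd t).sub_const 1
  -- j → 0
  have hj_tendsto : Tendsto j L (nhds 0) := by
    have h1 := (hj 0).continuousAt.tendsto
    rw [hj0] at h1
    exact h1.mono_left nhdsWithin_le_nhds
  -- stage 1 : d - 1 = o(t)
  have s1d : (fun t => d t - 1) =o[L] fun t : ℝ => t ^ 1 := by
    apply MLT.step hd1deriv (by simp [hd0])
    apply MLT.tendsto_isLittleO_zero
    simpa using hκA.mul hj_tendsto
  -- stage 2 : j - t = o(t²)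
  have hr2deriv : ∀ t, HasDerivAt (fun x => j x - x) (d t - 1) t :=
    fun t => (hj t).sub (hasDerivAt_id t)
  have s2j : (fun t => j t - t) =o[L] fun t : ℝ => t ^ 2 :=
    MLT.step hr2deriv (by simp [hj0]) s1d
  -- j = O(t)
  have hjO : j =O[L] fun t : ℝ => t ^ 1 := by
    have h1 : (fun t : ℝ => j t - t) =O[L] fun t : ℝ => t ^ 1 :=
      s2j.isBigO.trans (MLT.pow_isBigO (by norm_num))
    have h2 : (fun t : ℝ => t) =O[L] fun t : ℝ => t ^ 1 := by
      have := isBigO_refl (fun t : ℝ => t) L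
      simpa [pow_one] using this
    have := h1.add h2
    simpa using this
  -- stage 2d : d - (1 + A/2 t²) = o(t²)
  have s2d : (fun t => d t - (1 + A/2 * t^2)) =o[L] fun t : ℝ => t ^ 2 := by
    have hpd : ∀ t, HasDerivAt (fun x => d x - (1 + A/2 * x^2)) (κ t * j t - A * t) t := by
      intro t
      have hp : HasDerivAt (fun x : ℝ => 1 + A/2 * x^2) (A * t) t := by
        have := (hasDerivAt_pow 2 t).const_mul (A/2)
        have h2 := this.const_add 1
        refine h2.congr_deriv ?_
        push_cast; ring
      exact (hd t).sub hp
    apply MLT.step hpd (by simp [hd0])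
    have heq : (fun t => κ t * j t - A * t) =
        fun t => (κ t - A) * j t + A * (j t - t) := by funext t; ring
    rw [heq]
    have h1 : (fun t => (κ t - A) * j t) =o[L] fun t : ℝ => t ^ 1 := by
      simpa using MLT.olo_mul_obo hκ0 hjO
    have h2 : (fun t => A * (j t - t)) =o[L] fun t : ℝ => t ^ 1 :=
      MLT.mono (s2j.const_mul_left A) (by norm_num)
    exact h1.add h2
  -- stage 3j : j - (t + A/6 t³) = o(t³)
  have s3j : (fun t => j t - (t + A/6 * t^3)) =o[L] fun t : ℝ => t ^ 3 := by
    have hpd : ∀ t, HasDerivAt (fun x => j x - (x + A/6 * x^3)) (d t - (1 + A/2 * t^2)) t := by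
      intro t
      have hp : HasDerivAt (fun x : ℝ => x + A/6 * x^3) (1 + A/2 * t^2) t := by
        have := (hasDerivAt_id t).add ((hasDerivAt_pow 3 t).const_mul (A/6))
        refine this.congr_deriv ?_
        push_cast; ring
      exact (hj t).sub hp
    exact MLT.step hpd (by simp [hj0]) s2d
  -- stage 3d : d - (1 + A/2 t² + B/3 t³) = o(t³)
  have s3d : (fun t => d t - (1 + A/2 * t^2 + B/3 * t^3)) =o[L] fun t : ℝ => t ^ 3 := by
    have hpd : ∀ t, HasDerivAt (fun x => d x - (1 + A/2 * x^2 + B/3 * x^3))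
        (κ t * j t - (A * t + B * t^2)) t := by
      intro t
      have hp : HasDerivAt (fun x : ℝ => 1 + A/2 * x^2 + B/3 * x^3) (A * t + B * t^2) t := by
        have := (((hasDerivAt_pow 2 t).const_mul (A/2)).const_add 1).add
          ((hasDerivAt_pow 3 t).const_mul (B/3))
        refine this.congr_deriv ?_
        push_cast; ring
      exact (hd t).sub hp
    apply MLT.step hpd (by simp [hd0])
    have heq : (fun t => κ t * j t - (A * t + B * t^2)) =
        fun t => (κ t - (A + B * t)) * j t + (A + B * t) * (j t - t) := by funext t; ring
    rw [heq]
    have hPO : (fun t : ℝ => A + B * t) =O[L] fun t : ℝ => t ^ 0 := by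
      simp only [pow_zero]
      apply Tendsto.isBigO_one
      have : Tendsto (fun t : ℝ => A + B * t) (nhds 0) (nhds (A + B * 0)) :=
        Continuous.tendsto (by fun_prop) 0
      exact this.mono_left nhdsWithin_le_nhds
    have h1 : (fun t => (κ t - (A + B * t)) * j t) =o[L] fun t : ℝ => t ^ 2 := by
      simpa using MLT.olo_mul_obo hκ1 hjO
    have h2 : (fun t => (A + B * t) * (j t - t)) =o[L] fun t : ℝ => t ^ 2 := by
      simpa using MLT.obo_mul_olo hPO s2j
    exact h1.add h2
  -- stage 4j : j - (t + A/6 t³ + B/12 t⁴) = o(t⁴)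
  have s4j : (fun t => j t - (t + A/6 * t^3 + B/12 * t^4)) =o[L] fun t : ℝ => t ^ 4 := by
    have hpd : ∀ t, HasDerivAt (fun x => j x - (x + A/6 * x^3 + B/12 * x^4))
        (d t - (1 + A/2 * t^2 + B/3 * t^3)) t := by
      intro t
      have hp : HasDerivAt (fun x : ℝ => x + A/6 * x^3 + B/12 * x^4)
          (1 + A/2 * t^2 + B/3 * t^3) t := by
        have := ((hasDerivAt_id t).add ((hasDerivAt_pow 3 t).const_mul (A/6))).add
          ((hasDerivAt_pow 4 t).const_mul (B/12))
        refine this.congr_deriv ?_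
        push_cast; ring
      exact (hj t).sub hp
    exact MLT.step hpd (by simp [hj0]) s3d
  -- stage 4d : d - D = o(t⁴)
  have s4d : (fun t => d t - (1 + A/2 * t^2 + B/3 * t^3 + (E/4 + A^2/24) * t^4))
      =o[L] fun t : ℝ => t ^ 4 := by
    have hpd : ∀ t, HasDerivAt
        (fun x => d x - (1 + A/2 * x^2 + B/3 * x^3 + (E/4 + A^2/24) * x^4))
        (κ t * j t - (A * t + B * t^2 + (E + A^2/6) * t^3)) t := by
      intro t
      have hp : HasDerivAt (fun x : ℝ => 1 + A/2 * x^2 + B/3 * x^3 + (E/4 + A^2/24) * x^4)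
          (A * t + B * t^2 + (E + A^2/6) * t^3) t := by
        have := ((((hasDerivAt_pow 2 t).const_mul (A/2)).const_add 1).add
          ((hasDerivAt_pow 3 t).const_mul (B/3))).add
          ((hasDerivAt_pow 4 t).const_mul (E/4 + A^2/24))
        refine this.congr_deriv ?_
        push_cast; ring
      exact (hd t).sub hp
    apply MLT.step hpd (by simp [hd0])
    have heq : (fun t => κ t * j t - (A * t + B * t^2 + (E + A^2/6) * t^3)) =
        fun t => (κ t - (A + B * t + E * t^2)) * j t
          + (A + B * t + E * t^2) * (j t - (t + A/6 * t^3 + B/12 * t^4))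
          + ((A*B/4) * t^4 + (B^2/12 + A*E/6) * t^5 + (B*E/12) * t^6) := by
      funext t; ring
    rw [heq]
    have hPO : (fun t : ℝ => A + B * t + E * t^2) =O[L] fun t : ℝ => t ^ 0 := by
      simp only [pow_zero]
      apply Tendsto.isBigO_one
      have : Tendsto (fun t : ℝ => A + B * t + E * t^2) (nhds 0) (nhds (A + B * 0 + E * 0^2)) :=
        Continuous.tendsto (by fun_prop) 0
      exact this.mono_left nhdsWithin_le_nhds
    have h1 : (fun t => (κ t - (A + B * t + E * t^2)) * j t) =o[L] fun t : ℝ => t ^ 3 := by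
      simpa using MLT.olo_mul_obo hκ hjO
    have h2 : (fun t => (A + B * t + E * t^2) * (j t - (t + A/6 * t^3 + B/12 * t^4)))
        =o[L] fun t : ℝ => t ^ 3 := by
      have := MLT.obo_mul_olo hPO s4j
      exact MLT.mono (by simpa using this) (by norm_num)
    have h3 : (fun t : ℝ => (A*B/4) * t^4 + (B^2/12 + A*E/6) * t^5 + (B*E/12) * t^6)
        =o[L] fun t : ℝ => t ^ 3 :=
      ((MLT.monomial _ (by norm_num)).add (MLT.monomial _ (by norm_num))).add
        (MLT.monomial _ (by norm_num))
    exact (h1.add h2).add h3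
  -- stage 5j : j - J = o(t⁵)
  have s5j : (fun t => j t - (t + A/6 * t^3 + B/12 * t^4 + (E/20 + A^2/120) * t^5))
      =o[L] fun t : ℝ => t ^ 5 := by
    have hpd : ∀ t, HasDerivAt
        (fun x => j x - (x + A/6 * x^3 + B/12 * x^4 + (E/20 + A^2/120) * x^5))
        (d t - (1 + A/2 * t^2 + B/3 * t^3 + (E/4 + A^2/24) * t^4)) t := by
      intro t
      have hp : HasDerivAt (fun x : ℝ => x + A/6 * x^3 + B/12 * x^4 + (E/20 + A^2/120) * x^5)
          (1 + A/2 * t^2 + B/3 * t^3 + (E/4 + A^2/24) * t^4) t := by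
        have := (((hasDerivAt_id t).add ((hasDerivAt_pow 3 t).const_mul (A/6))).add
          ((hasDerivAt_pow 4 t).const_mul (B/12))).add
          ((hasDerivAt_pow 5 t).const_mul (E/20 + A^2/120))
        refine this.congr_deriv ?_
        push_cast; ring
      exact (hj t).sub hp
    exact MLT.step hpd (by simp [hj0]) s4d
  have hdO : d =O[L] fun t : ℝ => t ^ 0 := by
    simp only [pow_zero]
    apply Tendsto.isBigO_one
    have := (hd 0).continuousAt.tendsto
    rw [hd0] at this
    exact this.mono_left nhdsWithin_le_nhds
  exact ⟨s5j, s4d, hjO, hdO⟩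


lemma MLT.obo_mul_obo {f g : ℝ → ℝ} {m n : ℕ} (hf : f =O[L] fun t => t ^ m)
    (hg : g =O[L] fun t => t ^ n) : (fun t => f t * g t) =O[L] fun t => t ^ (m + n) := by
  simpa [pow_add] using hf.mul hg

lemma MLT.contO1 {q : ℝ → ℝ} (hq : Continuous q) : q =O[L] fun t : ℝ => t ^ 0 := by
  simp only [pow_zero]
  exact Tendsto.isBigO_one ℝ ((hq.tendsto 0).mono_left nhdsWithin_le_nhds)

lemma MLT.id_O : (fun t : ℝ => t) =O[L] fun t : ℝ => t ^ 1 := by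
  have := isBigO_refl (fun t : ℝ => t) L
  simpa [pow_one] using this

lemma MLT.mulO {q : ℝ → ℝ} (hq : Continuous q) :
    (fun t : ℝ => t * q t) =O[L] fun t : ℝ => t ^ 1 := by
  have := MLT.obo_mul_obo MLT.id_O (MLT.contO1 hq)
  simpa using this

lemma MLT.polyJ_O (a b e : ℝ) :
    (fun t : ℝ => t + a/6 * t^3 + b/12 * t^4 + (e/20 + a^2/120) * t^5)
      =O[L] fun t : ℝ => t ^ 1 := by
  have heq : (fun t : ℝ => t + a/6 * t^3 + b/12 * t^4 + (e/20 + a^2/120) * t^5)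
      = fun t : ℝ => t * (1 + a/6 * t^2 + b/12 * t^3 + (e/20 + a^2/120) * t^4) := by
    funext t; ring
  rw [heq]
  exact MLT.mulO (by fun_prop)

lemma MLT.polyD_O (a b e : ℝ) :
    (fun t : ℝ => 1 + a/2 * t^2 + b/3 * t^3 + (e/4 + a^2/24) * t^4)
      =O[L] fun t : ℝ => t ^ 0 :=
  MLT.contO1 (by fun_prop)

lemma MLT.prod3 {f1 f2 f3 g1 g2 g3 : ℝ → ℝ}
    (h1 : (fun t => f1 t - g1 t) =o[L] fun t => t ^ 4)
    (h2 : (fun t => f2 t - g2 t) =o[L] fun t => t ^ 5)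
    (h3 : (fun t => f3 t - g3 t) =o[L] fun t => t ^ 5)
    (hf2 : f2 =O[L] fun t => t ^ 1) (hf3 : f3 =O[L] fun t => t ^ 1)
    (hg1 : g1 =O[L] fun t => t ^ 0) (hg2 : g2 =O[L] fun t => t ^ 1) :
    (fun t => f1 t * f2 t * f3 t - g1 t * g2 t * g3 t) =o[L] fun t => t ^ 6 := by
  have heq : (fun t => f1 t * f2 t * f3 t - g1 t * g2 t * g3 t)
      = fun t => ((f1 t - g1 t) * f2 t) * f3 t + (g1 t * (f2 t - g2 t)) * f3 t
          + (g1 t * g2 t) * (f3 t - g3 t) := by funext t; ring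
  rw [heq]
  have t1 : (fun t => ((f1 t - g1 t) * f2 t) * f3 t) =o[L] fun t => t ^ 6 := by
    have := MLT.olo_mul_obo (MLT.olo_mul_obo h1 hf2) hf3
    simpa using this
  have t2 : (fun t => (g1 t * (f2 t - g2 t)) * f3 t) =o[L] fun t => t ^ 6 := by
    have := MLT.olo_mul_obo (MLT.obo_mul_olo hg1 h2) hf3
    simpa using this
  have t3 : (fun t => (g1 t * g2 t) * (f3 t - g3 t)) =o[L] fun t => t ^ 6 := by
    have := MLT.obo_mul_olo (MLT.obo_mul_obo hg1 hg2) h3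
    simpa using this
  exact (t1.add t2).add t3

lemma MLT.jsub {j : ℝ → ℝ} {a b e : ℝ}
    (h : (fun t => j t - (t + a/6 * t^3 + b/12 * t^4 + (e/20 + a^2/120) * t^5))
      =o[L] fun t => t ^ 5) :
    (fun t => j t - t) =o[L] fun t => t ^ 2 := by
  have heq : (fun t => j t - t)
      = fun t => (j t - (t + a/6 * t^3 + b/12 * t^4 + (e/20 + a^2/120) * t^5))
          + ((a/6) * t^3 + (b/12) * t^4 + ((e/20 + a^2/120)) * t^5) := by funext t; ring
  rw [heq]
  exact (MLT.mono h (by norm_num)).add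
    (((MLT.monomial _ (by norm_num)).add (MLT.monomial _ (by norm_num))).add
      (MLT.monomial _ (by norm_num)))


open Filter Asymptotics in
theorem multiplicative_lemma_taylor (T : ℝ) (hT : 0 < T)
    (κ₁ κ₂ : ℝ → ℝ) (hκ₁ : ContDiff ℝ (⊤ : ℕ∞) κ₁) (hκ₂ : ContDiff ℝ (⊤ : ℕ∞) κ₂)
    (hκ0 : κ₁ 0 ≠ κ₂ 0)
    (j₁ j₂ jav d₁ d₂ dav : ℝ → ℝ)
    (hj₁ : ∀ t, HasDerivAt j₁ (d₁ t) t) (hd₁ : ∀ t, HasDerivAt d₁ (κ₁ t * j₁ t) t)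
    (hj₂ : ∀ t, HasDerivAt j₂ (d₂ t) t) (hd₂ : ∀ t, HasDerivAt d₂ (κ₂ t * j₂ t) t)
    (hjav : ∀ t, HasDerivAt jav (dav t) t)
    (hdav : ∀ t, HasDerivAt dav ((κ₁ t + κ₂ t) / 2 * jav t) t)
    (h₁0 : j₁ 0 = 0) (h₂0 : j₂ 0 = 0) (hav0 : jav 0 = 0)
    (h₁0' : d₁ 0 = 1) (h₂0' : d₂ 0 = 1) (hav0' : dav 0 = 1)
    (hpos₁ : ∀ t ∈ Set.Ioc (0 : ℝ) T, 0 < j₁ t)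
    (hpos₂ : ∀ t ∈ Set.Ioc (0 : ℝ) T, 0 < j₂ t)
    (hposav : ∀ t ∈ Set.Ioc (0 : ℝ) T, 0 < jav t) :
    (fun t => (2 * dav t / jav t - d₁ t / j₁ t - d₂ t / j₂ t) -
        (1 / 45) * (κ₁ 0 ^ 2 + κ₂ 0 ^ 2 - 2 * ((κ₁ 0 + κ₂ 0) / 2) ^ 2) * t ^ 3)
      =o[nhdsWithin 0 (Set.Ioi 0)] (fun t => t ^ 3) ∧
    ∀ᶠ t in nhdsWithin 0 (Set.Ioi 0),
      0 < 2 * dav t / jav t - d₁ t / j₁ t - d₂ t / j₂ t := by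
  have hκ1e := MLT.kappa_exp (hκ₁.of_le (by simp))
  have hκ2e := MLT.kappa_exp (hκ₂.of_le (by simp))
  set a1 : ℝ := κ₁ 0 with ha1
  set a2 : ℝ := κ₂ 0 with ha2
  set b1 : ℝ := deriv κ₁ 0 with hb1
  set b2 : ℝ := deriv κ₂ 0 with hb2
  set e1 : ℝ := deriv (deriv κ₁) 0 / 2 with he1
  set e2 : ℝ := deriv (deriv κ₂) 0 / 2 with he2
  -- average curvature expansion
  have hκave : (fun t => (fun s => (κ₁ s + κ₂ s) / 2) t -
      ((a1+a2)/2 + (b1+b2)/2 * t + (e1+e2)/2 * t ^ 2)) =o[L] fun t => t ^ 2 := by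
    have heq : (fun t => (κ₁ t + κ₂ t) / 2 -
        ((a1+a2)/2 + (b1+b2)/2 * t + (e1+e2)/2 * t ^ 2))
        = fun t => (1/2) * ((κ₁ t - (a1 + b1 * t + e1 * t ^ 2))
            + (κ₂ t - (a2 + b2 * t + e2 * t ^ 2))) := by funext t; ring
    rw [show (fun t => (fun s => (κ₁ s + κ₂ s) / 2) t -
        ((a1+a2)/2 + (b1+b2)/2 * t + (e1+e2)/2 * t ^ 2)) = (fun t => (κ₁ t + κ₂ t) / 2 -
        ((a1+a2)/2 + (b1+b2)/2 * t + (e1+e2)/2 * t ^ 2)) from rfl, heq]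
    exact (hκ1e.add hκ2e).const_mul_left (1/2)
  obtain ⟨hJ1, hD1, hj1O, hd1O⟩ := MLT.ode_exp hκ1e hj₁ hd₁ h₁0 h₁0'
  obtain ⟨hJ2, hD2, hj2O, hd2O⟩ := MLT.ode_exp hκ2e hj₂ hd₂ h₂0 h₂0'
  obtain ⟨hJav, hDav, hjavO, hdavO⟩ :=
    MLT.ode_exp (κ := fun s => (κ₁ s + κ₂ s) / 2) hκave hjav hdav hav0 hav0'
  set C : ℝ := (1 / 45) * (a1 ^ 2 + a2 ^ 2 - 2 * ((a1 + a2) / 2) ^ 2) with hC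
  have hCpos : 0 < C := by
    have h : C = (a1 - a2)^2 / 90 := by rw [hC]; ring
    rw [h]
    have := sub_ne_zero.mpr hκ0
    positivity
  -- numerator estimate
  have hP1 := MLT.prod3 hDav hJ1 hJ2 hj1O hj2O
    (MLT.polyD_O ((a1+a2)/2) ((b1+b2)/2) ((e1+e2)/2)) (MLT.polyJ_O a1 b1 e1)
  have hP2 := MLT.prod3 hD1 hJav hJ2 hjavO hj2O
    (MLT.polyD_O a1 b1 e1) (MLT.polyJ_O ((a1+a2)/2) ((b1+b2)/2) ((e1+e2)/2))
  have hP3 := MLT.prod3 hD2 hJav hJ1 hjavO hj1O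
    (MLT.polyD_O a2 b2 e2) (MLT.polyJ_O ((a1+a2)/2) ((b1+b2)/2) ((e1+e2)/2))
  have hGtail : (fun t : ℝ => t ^ 7 * ((5/144) * a2 * b2 - (5/144) * b1 * a2 - (5/144) * a1 * b2 + (5/144) * a1 * b1 + (1/96) * b2^2 *
t + (1/40) * a2 * e2 * t + (1/480) * a2^3 * t - (1/40) * e1 * a2 * t - (1/48) * b1 * b2 * t +
(1/96) * b1^2 * t - (1/40) * a1 * e2 * t - (1/480) * a1 * a2^2 * t + (1/40) * a1 * e1 * t -
(1/480) * a1^2 * a2 * t + (1/480) * a1^3 * t + (7/480) * b2 * e2 * t^2 + (1/640) * a2^2 * b2 *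
t^2 - (7/480) * e1 * b2 * t^2 - (7/480) * b1 * e2 * t^2 - (77/17280) * b1 * a2^2 * t^2 +
(7/480) * b1 * e1 * t^2 + (5/1728) * a1 * a2 * b2 * t^2 + (5/1728) * a1 * b1 * a2 * t^2 -
(77/17280) * a1^2 * b2 * t^2 + (1/640) * a1^2 * b1 * t^2 + (1/200) * e2^2 * t^3 + (1/800) *
a2^2 * e2 * t^3 + (1/14400) * a2^4 * t^3 - (1/100) * e1 * e2 * t^3 - (1/288) * e1 * a2^2 * t^3
+ (1/200) * e1^2 * t^3 - (1/1728) * b1 * a2 * b2 * t^3 + (1/1728) * b1^2 * a2 * t^3 + (1/1728)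
* a1 * b2^2 * t^3 + (1/450) * a1 * a2 * e2 * t^3 + (1/7200) * a1 * a2^3 * t^3 + (1/450) * a1 *
e1 * a2 * t^3 - (1/1728) * a1 * b1 * b2 * t^3 - (1/288) * a1^2 * e2 * t^3 - (1/2400) * a1^2 *
a2^2 * t^3 + (1/800) * a1^2 * e1 * t^3 + (1/7200) * a1^3 * a2 * t^3 + (1/14400) * a1^4 * t^3 -
(1/960) * e1 * a2 * b2 * t^4 - (1/11520) * b1 * a2^3 * t^4 + (1/960) * b1 * e1 * a2 * t^4 +
(1/960) * a1 * b2 * e2 * t^4 + (1/11520) * a1 * a2^2 * b2 * t^4 - (1/960) * a1 * b1 * e2 * t^4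
+ (1/11520) * a1^2 * b1 * a2 * t^4 - (1/11520) * a1^3 * b2 * t^4 - (1/5760) * e1 * b2^2 * t^5 -
(1/2400) * e1 * a2 * e2 * t^5 - (1/9600) * e1 * a2^3 * t^5 + (1/2400) * e1^2 * a2 * t^5 +
(1/5760) * b1 * b2 * e2 * t^5 + (1/5760) * b1 * e1 * b2 * t^5 - (1/5760) * b1^2 * e2 * t^5 -
(1/34560) * b1^2 * a2^2 * t^5 + (1/2400) * a1 * e2^2 * t^5 + (1/9600) * a1 * a2^2 * e2 * t^5 +
(1/172800) * a1 * a2^4 * t^5 - (1/2400) * a1 * e1 * e2 * t^5 + (1/17280) * a1 * b1 * a2 * b2 *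
t^5 - (1/34560) * a1^2 * b2^2 * t^5 - (1/172800) * a1^2 * a2^3 * t^5 + (1/9600) * a1^2 * e1 *
a2 * t^5 - (1/9600) * a1^3 * e2 * t^5 - (1/172800) * a1^3 * a2^2 * t^5 + (1/172800) * a1^4 * a2
* t^5 - (1/9600) * e1 * b2 * e2 * t^6 - (1/38400) * e1 * a2^2 * b2 * t^6 + (1/9600) * e1^2 * b2
* t^6 + (1/9600) * b1 * e2^2 * t^6 + (1/38400) * b1 * a2^2 * e2 * t^6 + (1/691200) * b1 * a2^4
* t^6 - (1/9600) * b1 * e1 * e2 * t^6 - (1/57600) * b1 * e1 * a2^2 * t^6 + (1/57600) * a1 * e1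
* a2 * b2 * t^6 + (1/57600) * a1 * b1 * a2 * e2 * t^6 + (1/345600) * a1 * b1 * a2^3 * t^6 -
(1/57600) * a1^2 * b2 * e2 * t^6 - (1/230400) * a1^2 * a2^2 * b2 * t^6 + (1/38400) * a1^2 * e1
* b2 * t^6 - (1/38400) * a1^2 * b1 * e2 * t^6 - (1/230400) * a1^2 * b1 * a2^2 * t^6 +
(1/345600) * a1^3 * a2 * b2 * t^6 + (1/691200) * a1^4 * b2 * t^6)) =o[L] fun t => t ^ 6 := by
    have h1 : (fun t : ℝ => t * ((5/144) * a2 * b2 - (5/144) * b1 * a2 - (5/144) * a1 * b2 + (5/144) * a1 * b1 + (1/96) * b2^2 *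
t + (1/40) * a2 * e2 * t + (1/480) * a2^3 * t - (1/40) * e1 * a2 * t - (1/48) * b1 * b2 * t +
(1/96) * b1^2 * t - (1/40) * a1 * e2 * t - (1/480) * a1 * a2^2 * t + (1/40) * a1 * e1 * t -
(1/480) * a1^2 * a2 * t + (1/480) * a1^3 * t + (7/480) * b2 * e2 * t^2 + (1/640) * a2^2 * b2 *
t^2 - (7/480) * e1 * b2 * t^2 - (7/480) * b1 * e2 * t^2 - (77/17280) * b1 * a2^2 * t^2 +
(7/480) * b1 * e1 * t^2 + (5/1728) * a1 * a2 * b2 * t^2 + (5/1728) * a1 * b1 * a2 * t^2 -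
(77/17280) * a1^2 * b2 * t^2 + (1/640) * a1^2 * b1 * t^2 + (1/200) * e2^2 * t^3 + (1/800) *
a2^2 * e2 * t^3 + (1/14400) * a2^4 * t^3 - (1/100) * e1 * e2 * t^3 - (1/288) * e1 * a2^2 * t^3
+ (1/200) * e1^2 * t^3 - (1/1728) * b1 * a2 * b2 * t^3 + (1/1728) * b1^2 * a2 * t^3 + (1/1728)
* a1 * b2^2 * t^3 + (1/450) * a1 * a2 * e2 * t^3 + (1/7200) * a1 * a2^3 * t^3 + (1/450) * a1 *
e1 * a2 * t^3 - (1/1728) * a1 * b1 * b2 * t^3 - (1/288) * a1^2 * e2 * t^3 - (1/2400) * a1^2 *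
a2^2 * t^3 + (1/800) * a1^2 * e1 * t^3 + (1/7200) * a1^3 * a2 * t^3 + (1/14400) * a1^4 * t^3 -
(1/960) * e1 * a2 * b2 * t^4 - (1/11520) * b1 * a2^3 * t^4 + (1/960) * b1 * e1 * a2 * t^4 +
(1/960) * a1 * b2 * e2 * t^4 + (1/11520) * a1 * a2^2 * b2 * t^4 - (1/960) * a1 * b1 * e2 * t^4
+ (1/11520) * a1^2 * b1 * a2 * t^4 - (1/11520) * a1^3 * b2 * t^4 - (1/5760) * e1 * b2^2 * t^5 -
(1/2400) * e1 * a2 * e2 * t^5 - (1/9600) * e1 * a2^3 * t^5 + (1/2400) * e1^2 * a2 * t^5 +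
(1/5760) * b1 * b2 * e2 * t^5 + (1/5760) * b1 * e1 * b2 * t^5 - (1/5760) * b1^2 * e2 * t^5 -
(1/34560) * b1^2 * a2^2 * t^5 + (1/2400) * a1 * e2^2 * t^5 + (1/9600) * a1 * a2^2 * e2 * t^5 +
(1/172800) * a1 * a2^4 * t^5 - (1/2400) * a1 * e1 * e2 * t^5 + (1/17280) * a1 * b1 * a2 * b2 *
t^5 - (1/34560) * a1^2 * b2^2 * t^5 - (1/172800) * a1^2 * a2^3 * t^5 + (1/9600) * a1^2 * e1 *
a2 * t^5 - (1/9600) * a1^3 * e2 * t^5 - (1/172800) * a1^3 * a2^2 * t^5 + (1/172800) * a1^4 * a2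
* t^5 - (1/9600) * e1 * b2 * e2 * t^6 - (1/38400) * e1 * a2^2 * b2 * t^6 + (1/9600) * e1^2 * b2
* t^6 + (1/9600) * b1 * e2^2 * t^6 + (1/38400) * b1 * a2^2 * e2 * t^6 + (1/691200) * b1 * a2^4
* t^6 - (1/9600) * b1 * e1 * e2 * t^6 - (1/57600) * b1 * e1 * a2^2 * t^6 + (1/57600) * a1 * e1
* a2 * b2 * t^6 + (1/57600) * a1 * b1 * a2 * e2 * t^6 + (1/345600) * a1 * b1 * a2^3 * t^6 -
(1/57600) * a1^2 * b2 * e2 * t^6 - (1/230400) * a1^2 * a2^2 * b2 * t^6 + (1/38400) * a1^2 * e1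
* b2 * t^6 - (1/38400) * a1^2 * b1 * e2 * t^6 - (1/230400) * a1^2 * b1 * a2^2 * t^6 +
(1/345600) * a1^3 * a2 * b2 * t^6 + (1/691200) * a1^4 * b2 * t^6)) =o[L] fun t : ℝ => t ^ 0 := by
      apply MLT.tendsto_isLittleO_zero
      have hc : Continuous (fun t : ℝ => t * ((5/144) * a2 * b2 - (5/144) * b1 * a2 - (5/144) * a1 * b2 + (5/144) * a1 * b1 + (1/96) * b2^2 *
t + (1/40) * a2 * e2 * t + (1/480) * a2^3 * t - (1/40) * e1 * a2 * t - (1/48) * b1 * b2 * t +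
(1/96) * b1^2 * t - (1/40) * a1 * e2 * t - (1/480) * a1 * a2^2 * t + (1/40) * a1 * e1 * t -
(1/480) * a1^2 * a2 * t + (1/480) * a1^3 * t + (7/480) * b2 * e2 * t^2 + (1/640) * a2^2 * b2 *
t^2 - (7/480) * e1 * b2 * t^2 - (7/480) * b1 * e2 * t^2 - (77/17280) * b1 * a2^2 * t^2 +
(7/480) * b1 * e1 * t^2 + (5/1728) * a1 * a2 * b2 * t^2 + (5/1728) * a1 * b1 * a2 * t^2 -
(77/17280) * a1^2 * b2 * t^2 + (1/640) * a1^2 * b1 * t^2 + (1/200) * e2^2 * t^3 + (1/800) *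
a2^2 * e2 * t^3 + (1/14400) * a2^4 * t^3 - (1/100) * e1 * e2 * t^3 - (1/288) * e1 * a2^2 * t^3
+ (1/200) * e1^2 * t^3 - (1/1728) * b1 * a2 * b2 * t^3 + (1/1728) * b1^2 * a2 * t^3 + (1/1728)
* a1 * b2^2 * t^3 + (1/450) * a1 * a2 * e2 * t^3 + (1/7200) * a1 * a2^3 * t^3 + (1/450) * a1 *
e1 * a2 * t^3 - (1/1728) * a1 * b1 * b2 * t^3 - (1/288) * a1^2 * e2 * t^3 - (1/2400) * a1^2 *
a2^2 * t^3 + (1/800) * a1^2 * e1 * t^3 + (1/7200) * a1^3 * a2 * t^3 + (1/14400) * a1^4 * t^3 -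
(1/960) * e1 * a2 * b2 * t^4 - (1/11520) * b1 * a2^3 * t^4 + (1/960) * b1 * e1 * a2 * t^4 +
(1/960) * a1 * b2 * e2 * t^4 + (1/11520) * a1 * a2^2 * b2 * t^4 - (1/960) * a1 * b1 * e2 * t^4
+ (1/11520) * a1^2 * b1 * a2 * t^4 - (1/11520) * a1^3 * b2 * t^4 - (1/5760) * e1 * b2^2 * t^5 -
(1/2400) * e1 * a2 * e2 * t^5 - (1/9600) * e1 * a2^3 * t^5 + (1/2400) * e1^2 * a2 * t^5 +
(1/5760) * b1 * b2 * e2 * t^5 + (1/5760) * b1 * e1 * b2 * t^5 - (1/5760) * b1^2 * e2 * t^5 -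
(1/34560) * b1^2 * a2^2 * t^5 + (1/2400) * a1 * e2^2 * t^5 + (1/9600) * a1 * a2^2 * e2 * t^5 +
(1/172800) * a1 * a2^4 * t^5 - (1/2400) * a1 * e1 * e2 * t^5 + (1/17280) * a1 * b1 * a2 * b2 *
t^5 - (1/34560) * a1^2 * b2^2 * t^5 - (1/172800) * a1^2 * a2^3 * t^5 + (1/9600) * a1^2 * e1 *
a2 * t^5 - (1/9600) * a1^3 * e2 * t^5 - (1/172800) * a1^3 * a2^2 * t^5 + (1/172800) * a1^4 * a2
* t^5 - (1/9600) * e1 * b2 * e2 * t^6 - (1/38400) * e1 * a2^2 * b2 * t^6 + (1/9600) * e1^2 * b2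
* t^6 + (1/9600) * b1 * e2^2 * t^6 + (1/38400) * b1 * a2^2 * e2 * t^6 + (1/691200) * b1 * a2^4
* t^6 - (1/9600) * b1 * e1 * e2 * t^6 - (1/57600) * b1 * e1 * a2^2 * t^6 + (1/57600) * a1 * e1
* a2 * b2 * t^6 + (1/57600) * a1 * b1 * a2 * e2 * t^6 + (1/345600) * a1 * b1 * a2^3 * t^6 -
(1/57600) * a1^2 * b2 * e2 * t^6 - (1/230400) * a1^2 * a2^2 * b2 * t^6 + (1/38400) * a1^2 * e1
* b2 * t^6 - (1/38400) * a1^2 * b1 * e2 * t^6 - (1/230400) * a1^2 * b1 * a2^2 * t^6 +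
(1/345600) * a1^3 * a2 * b2 * t^6 + (1/691200) * a1^4 * b2 * t^6)) := by fun_prop
      have h2 : Tendsto (fun t : ℝ => t * ((5/144) * a2 * b2 - (5/144) * b1 * a2 - (5/144) * a1 * b2 + (5/144) * a1 * b1 + (1/96) * b2^2 *
t + (1/40) * a2 * e2 * t + (1/480) * a2^3 * t - (1/40) * e1 * a2 * t - (1/48) * b1 * b2 * t +
(1/96) * b1^2 * t - (1/40) * a1 * e2 * t - (1/480) * a1 * a2^2 * t + (1/40) * a1 * e1 * t -
(1/480) * a1^2 * a2 * t + (1/480) * a1^3 * t + (7/480) * b2 * e2 * t^2 + (1/640) * a2^2 * b2 *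
t^2 - (7/480) * e1 * b2 * t^2 - (7/480) * b1 * e2 * t^2 - (77/17280) * b1 * a2^2 * t^2 +
(7/480) * b1 * e1 * t^2 + (5/1728) * a1 * a2 * b2 * t^2 + (5/1728) * a1 * b1 * a2 * t^2 -
(77/17280) * a1^2 * b2 * t^2 + (1/640) * a1^2 * b1 * t^2 + (1/200) * e2^2 * t^3 + (1/800) *
a2^2 * e2 * t^3 + (1/14400) * a2^4 * t^3 - (1/100) * e1 * e2 * t^3 - (1/288) * e1 * a2^2 * t^3
+ (1/200) * e1^2 * t^3 - (1/1728) * b1 * a2 * b2 * t^3 + (1/1728) * b1^2 * a2 * t^3 + (1/1728)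
* a1 * b2^2 * t^3 + (1/450) * a1 * a2 * e2 * t^3 + (1/7200) * a1 * a2^3 * t^3 + (1/450) * a1 *
e1 * a2 * t^3 - (1/1728) * a1 * b1 * b2 * t^3 - (1/288) * a1^2 * e2 * t^3 - (1/2400) * a1^2 *
a2^2 * t^3 + (1/800) * a1^2 * e1 * t^3 + (1/7200) * a1^3 * a2 * t^3 + (1/14400) * a1^4 * t^3 -
(1/960) * e1 * a2 * b2 * t^4 - (1/11520) * b1 * a2^3 * t^4 + (1/960) * b1 * e1 * a2 * t^4 +
(1/960) * a1 * b2 * e2 * t^4 + (1/11520) * a1 * a2^2 * b2 * t^4 - (1/960) * a1 * b1 * e2 * t^4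
+ (1/11520) * a1^2 * b1 * a2 * t^4 - (1/11520) * a1^3 * b2 * t^4 - (1/5760) * e1 * b2^2 * t^5 -
(1/2400) * e1 * a2 * e2 * t^5 - (1/9600) * e1 * a2^3 * t^5 + (1/2400) * e1^2 * a2 * t^5 +
(1/5760) * b1 * b2 * e2 * t^5 + (1/5760) * b1 * e1 * b2 * t^5 - (1/5760) * b1^2 * e2 * t^5 -
(1/34560) * b1^2 * a2^2 * t^5 + (1/2400) * a1 * e2^2 * t^5 + (1/9600) * a1 * a2^2 * e2 * t^5 +
(1/172800) * a1 * a2^4 * t^5 - (1/2400) * a1 * e1 * e2 * t^5 + (1/17280) * a1 * b1 * a2 * b2 *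
t^5 - (1/34560) * a1^2 * b2^2 * t^5 - (1/172800) * a1^2 * a2^3 * t^5 + (1/9600) * a1^2 * e1 *
a2 * t^5 - (1/9600) * a1^3 * e2 * t^5 - (1/172800) * a1^3 * a2^2 * t^5 + (1/172800) * a1^4 * a2
* t^5 - (1/9600) * e1 * b2 * e2 * t^6 - (1/38400) * e1 * a2^2 * b2 * t^6 + (1/9600) * e1^2 * b2
* t^6 + (1/9600) * b1 * e2^2 * t^6 + (1/38400) * b1 * a2^2 * e2 * t^6 + (1/691200) * b1 * a2^4
* t^6 - (1/9600) * b1 * e1 * e2 * t^6 - (1/57600) * b1 * e1 * a2^2 * t^6 + (1/57600) * a1 * e1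
* a2 * b2 * t^6 + (1/57600) * a1 * b1 * a2 * e2 * t^6 + (1/345600) * a1 * b1 * a2^3 * t^6 -
(1/57600) * a1^2 * b2 * e2 * t^6 - (1/230400) * a1^2 * a2^2 * b2 * t^6 + (1/38400) * a1^2 * e1
* b2 * t^6 - (1/38400) * a1^2 * b1 * e2 * t^6 - (1/230400) * a1^2 * b1 * a2^2 * t^6 +
(1/345600) * a1^3 * a2 * b2 * t^6 + (1/691200) * a1^4 * b2 * t^6)) (nhds 0) (nhds 0) := by
        have h3 := hc.tendsto 0
        simpa using h3
      exact h2.mono_left nhdsWithin_le_nhds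
    have hmul := MLT.obo_mul_olo (isBigO_refl (fun t : ℝ => t ^ 6) L) h1
    have heq : (fun t : ℝ => t ^ 7 * ((5/144) * a2 * b2 - (5/144) * b1 * a2 - (5/144) * a1 * b2 + (5/144) * a1 * b1 + (1/96) * b2^2 *
t + (1/40) * a2 * e2 * t + (1/480) * a2^3 * t - (1/40) * e1 * a2 * t - (1/48) * b1 * b2 * t +
(1/96) * b1^2 * t - (1/40) * a1 * e2 * t - (1/480) * a1 * a2^2 * t + (1/40) * a1 * e1 * t -
(1/480) * a1^2 * a2 * t + (1/480) * a1^3 * t + (7/480) * b2 * e2 * t^2 + (1/640) * a2^2 * b2 *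
t^2 - (7/480) * e1 * b2 * t^2 - (7/480) * b1 * e2 * t^2 - (77/17280) * b1 * a2^2 * t^2 +
(7/480) * b1 * e1 * t^2 + (5/1728) * a1 * a2 * b2 * t^2 + (5/1728) * a1 * b1 * a2 * t^2 -
(77/17280) * a1^2 * b2 * t^2 + (1/640) * a1^2 * b1 * t^2 + (1/200) * e2^2 * t^3 + (1/800) *
a2^2 * e2 * t^3 + (1/14400) * a2^4 * t^3 - (1/100) * e1 * e2 * t^3 - (1/288) * e1 * a2^2 * t^3
+ (1/200) * e1^2 * t^3 - (1/1728) * b1 * a2 * b2 * t^3 + (1/1728) * b1^2 * a2 * t^3 + (1/1728)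
* a1 * b2^2 * t^3 + (1/450) * a1 * a2 * e2 * t^3 + (1/7200) * a1 * a2^3 * t^3 + (1/450) * a1 *
e1 * a2 * t^3 - (1/1728) * a1 * b1 * b2 * t^3 - (1/288) * a1^2 * e2 * t^3 - (1/2400) * a1^2 *
a2^2 * t^3 + (1/800) * a1^2 * e1 * t^3 + (1/7200) * a1^3 * a2 * t^3 + (1/14400) * a1^4 * t^3 -
(1/960) * e1 * a2 * b2 * t^4 - (1/11520) * b1 * a2^3 * t^4 + (1/960) * b1 * e1 * a2 * t^4 +
(1/960) * a1 * b2 * e2 * t^4 + (1/11520) * a1 * a2^2 * b2 * t^4 - (1/960) * a1 * b1 * e2 * t^4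
+ (1/11520) * a1^2 * b1 * a2 * t^4 - (1/11520) * a1^3 * b2 * t^4 - (1/5760) * e1 * b2^2 * t^5 -
(1/2400) * e1 * a2 * e2 * t^5 - (1/9600) * e1 * a2^3 * t^5 + (1/2400) * e1^2 * a2 * t^5 +
(1/5760) * b1 * b2 * e2 * t^5 + (1/5760) * b1 * e1 * b2 * t^5 - (1/5760) * b1^2 * e2 * t^5 -
(1/34560) * b1^2 * a2^2 * t^5 + (1/2400) * a1 * e2^2 * t^5 + (1/9600) * a1 * a2^2 * e2 * t^5 +
(1/172800) * a1 * a2^4 * t^5 - (1/2400) * a1 * e1 * e2 * t^5 + (1/17280) * a1 * b1 * a2 * b2 *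
t^5 - (1/34560) * a1^2 * b2^2 * t^5 - (1/172800) * a1^2 * a2^3 * t^5 + (1/9600) * a1^2 * e1 *
a2 * t^5 - (1/9600) * a1^3 * e2 * t^5 - (1/172800) * a1^3 * a2^2 * t^5 + (1/172800) * a1^4 * a2
* t^5 - (1/9600) * e1 * b2 * e2 * t^6 - (1/38400) * e1 * a2^2 * b2 * t^6 + (1/9600) * e1^2 * b2
* t^6 + (1/9600) * b1 * e2^2 * t^6 + (1/38400) * b1 * a2^2 * e2 * t^6 + (1/691200) * b1 * a2^4
* t^6 - (1/9600) * b1 * e1 * e2 * t^6 - (1/57600) * b1 * e1 * a2^2 * t^6 + (1/57600) * a1 * e1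
* a2 * b2 * t^6 + (1/57600) * a1 * b1 * a2 * e2 * t^6 + (1/345600) * a1 * b1 * a2^3 * t^6 -
(1/57600) * a1^2 * b2 * e2 * t^6 - (1/230400) * a1^2 * a2^2 * b2 * t^6 + (1/38400) * a1^2 * e1
* b2 * t^6 - (1/38400) * a1^2 * b1 * e2 * t^6 - (1/230400) * a1^2 * b1 * a2^2 * t^6 +
(1/345600) * a1^3 * a2 * b2 * t^6 + (1/691200) * a1^4 * b2 * t^6)) = fun t : ℝ => t ^ 6 * (t * ((5/144) * a2 * b2 - (5/144) * b1 * a2 - (5/144) * a1 * b2 + (5/144) * a1 * b1 + (1/96) * b2^2 *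
t + (1/40) * a2 * e2 * t + (1/480) * a2^3 * t - (1/40) * e1 * a2 * t - (1/48) * b1 * b2 * t +
(1/96) * b1^2 * t - (1/40) * a1 * e2 * t - (1/480) * a1 * a2^2 * t + (1/40) * a1 * e1 * t -
(1/480) * a1^2 * a2 * t + (1/480) * a1^3 * t + (7/480) * b2 * e2 * t^2 + (1/640) * a2^2 * b2 *
t^2 - (7/480) * e1 * b2 * t^2 - (7/480) * b1 * e2 * t^2 - (77/17280) * b1 * a2^2 * t^2 +
(7/480) * b1 * e1 * t^2 + (5/1728) * a1 * a2 * b2 * t^2 + (5/1728) * a1 * b1 * a2 * t^2 -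
(77/17280) * a1^2 * b2 * t^2 + (1/640) * a1^2 * b1 * t^2 + (1/200) * e2^2 * t^3 + (1/800) *
a2^2 * e2 * t^3 + (1/14400) * a2^4 * t^3 - (1/100) * e1 * e2 * t^3 - (1/288) * e1 * a2^2 * t^3
+ (1/200) * e1^2 * t^3 - (1/1728) * b1 * a2 * b2 * t^3 + (1/1728) * b1^2 * a2 * t^3 + (1/1728)
* a1 * b2^2 * t^3 + (1/450) * a1 * a2 * e2 * t^3 + (1/7200) * a1 * a2^3 * t^3 + (1/450) * a1 *
e1 * a2 * t^3 - (1/1728) * a1 * b1 * b2 * t^3 - (1/288) * a1^2 * e2 * t^3 - (1/2400) * a1^2 *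
a2^2 * t^3 + (1/800) * a1^2 * e1 * t^3 + (1/7200) * a1^3 * a2 * t^3 + (1/14400) * a1^4 * t^3 -
(1/960) * e1 * a2 * b2 * t^4 - (1/11520) * b1 * a2^3 * t^4 + (1/960) * b1 * e1 * a2 * t^4 +
(1/960) * a1 * b2 * e2 * t^4 + (1/11520) * a1 * a2^2 * b2 * t^4 - (1/960) * a1 * b1 * e2 * t^4
+ (1/11520) * a1^2 * b1 * a2 * t^4 - (1/11520) * a1^3 * b2 * t^4 - (1/5760) * e1 * b2^2 * t^5 -
(1/2400) * e1 * a2 * e2 * t^5 - (1/9600) * e1 * a2^3 * t^5 + (1/2400) * e1^2 * a2 * t^5 +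
(1/5760) * b1 * b2 * e2 * t^5 + (1/5760) * b1 * e1 * b2 * t^5 - (1/5760) * b1^2 * e2 * t^5 -
(1/34560) * b1^2 * a2^2 * t^5 + (1/2400) * a1 * e2^2 * t^5 + (1/9600) * a1 * a2^2 * e2 * t^5 +
(1/172800) * a1 * a2^4 * t^5 - (1/2400) * a1 * e1 * e2 * t^5 + (1/17280) * a1 * b1 * a2 * b2 *
t^5 - (1/34560) * a1^2 * b2^2 * t^5 - (1/172800) * a1^2 * a2^3 * t^5 + (1/9600) * a1^2 * e1 *
a2 * t^5 - (1/9600) * a1^3 * e2 * t^5 - (1/172800) * a1^3 * a2^2 * t^5 + (1/172800) * a1^4 * a2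
* t^5 - (1/9600) * e1 * b2 * e2 * t^6 - (1/38400) * e1 * a2^2 * b2 * t^6 + (1/9600) * e1^2 * b2
* t^6 + (1/9600) * b1 * e2^2 * t^6 + (1/38400) * b1 * a2^2 * e2 * t^6 + (1/691200) * b1 * a2^4
* t^6 - (1/9600) * b1 * e1 * e2 * t^6 - (1/57600) * b1 * e1 * a2^2 * t^6 + (1/57600) * a1 * e1
* a2 * b2 * t^6 + (1/57600) * a1 * b1 * a2 * e2 * t^6 + (1/345600) * a1 * b1 * a2^3 * t^6 -
(1/57600) * a1^2 * b2 * e2 * t^6 - (1/230400) * a1^2 * a2^2 * b2 * t^6 + (1/38400) * a1^2 * e1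
* b2 * t^6 - (1/38400) * a1^2 * b1 * e2 * t^6 - (1/230400) * a1^2 * b1 * a2^2 * t^6 +
(1/345600) * a1^3 * a2 * b2 * t^6 + (1/691200) * a1^4 * b2 * t^6)) := by
      funext t; ring
    rw [heq]
    simpa using hmul
  have hNum : (fun t => 2 * (dav t * j₁ t * j₂ t) - d₁ t * jav t * j₂ t
      - d₂ t * jav t * j₁ t - C * t ^ 6) =o[L] fun t => t ^ 6 := by
    have heq : (fun t => 2 * (dav t * j₁ t * j₂ t) - d₁ t * jav t * j₂ t
        - d₂ t * jav t * j₁ t - C * t ^ 6)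
        = fun t => 2 * (dav t * j₁ t * j₂ t -
              (1 + (a1+a2)/2/2 * t^2 + (b1+b2)/2/3 * t^3 + ((e1+e2)/2/4 + ((a1+a2)/2)^2/24) * t^4)
              * (t + a1/6 * t^3 + b1/12 * t^4 + (e1/20 + a1^2/120) * t^5)
              * (t + a2/6 * t^3 + b2/12 * t^4 + (e2/20 + a2^2/120) * t^5))
          - (d₁ t * jav t * j₂ t -
              (1 + a1/2 * t^2 + b1/3 * t^3 + (e1/4 + a1^2/24) * t^4)
              * (t + (a1+a2)/2/6 * t^3 + (b1+b2)/2/12 * t^4 + ((e1+e2)/2/20 + ((a1+a2)/2)^2/120) * t^5)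
              * (t + a2/6 * t^3 + b2/12 * t^4 + (e2/20 + a2^2/120) * t^5))
          - (d₂ t * jav t * j₁ t -
              (1 + a2/2 * t^2 + b2/3 * t^3 + (e2/4 + a2^2/24) * t^4)
              * (t + (a1+a2)/2/6 * t^3 + (b1+b2)/2/12 * t^4 + ((e1+e2)/2/20 + ((a1+a2)/2)^2/120) * t^5)
              * (t + a1/6 * t^3 + b1/12 * t^4 + (e1/20 + a1^2/120) * t^5))
          + t ^ 7 * ((5/144) * a2 * b2 - (5/144) * b1 * a2 - (5/144) * a1 * b2 + (5/144) * a1 * b1 + (1/96) * b2^2 *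
t + (1/40) * a2 * e2 * t + (1/480) * a2^3 * t - (1/40) * e1 * a2 * t - (1/48) * b1 * b2 * t +
(1/96) * b1^2 * t - (1/40) * a1 * e2 * t - (1/480) * a1 * a2^2 * t + (1/40) * a1 * e1 * t -
(1/480) * a1^2 * a2 * t + (1/480) * a1^3 * t + (7/480) * b2 * e2 * t^2 + (1/640) * a2^2 * b2 *
t^2 - (7/480) * e1 * b2 * t^2 - (7/480) * b1 * e2 * t^2 - (77/17280) * b1 * a2^2 * t^2 +
(7/480) * b1 * e1 * t^2 + (5/1728) * a1 * a2 * b2 * t^2 + (5/1728) * a1 * b1 * a2 * t^2 -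
(77/17280) * a1^2 * b2 * t^2 + (1/640) * a1^2 * b1 * t^2 + (1/200) * e2^2 * t^3 + (1/800) *
a2^2 * e2 * t^3 + (1/14400) * a2^4 * t^3 - (1/100) * e1 * e2 * t^3 - (1/288) * e1 * a2^2 * t^3
+ (1/200) * e1^2 * t^3 - (1/1728) * b1 * a2 * b2 * t^3 + (1/1728) * b1^2 * a2 * t^3 + (1/1728)
* a1 * b2^2 * t^3 + (1/450) * a1 * a2 * e2 * t^3 + (1/7200) * a1 * a2^3 * t^3 + (1/450) * a1 *
e1 * a2 * t^3 - (1/1728) * a1 * b1 * b2 * t^3 - (1/288) * a1^2 * e2 * t^3 - (1/2400) * a1^2 *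
a2^2 * t^3 + (1/800) * a1^2 * e1 * t^3 + (1/7200) * a1^3 * a2 * t^3 + (1/14400) * a1^4 * t^3 -
(1/960) * e1 * a2 * b2 * t^4 - (1/11520) * b1 * a2^3 * t^4 + (1/960) * b1 * e1 * a2 * t^4 +
(1/960) * a1 * b2 * e2 * t^4 + (1/11520) * a1 * a2^2 * b2 * t^4 - (1/960) * a1 * b1 * e2 * t^4
+ (1/11520) * a1^2 * b1 * a2 * t^4 - (1/11520) * a1^3 * b2 * t^4 - (1/5760) * e1 * b2^2 * t^5 -
(1/2400) * e1 * a2 * e2 * t^5 - (1/9600) * e1 * a2^3 * t^5 + (1/2400) * e1^2 * a2 * t^5 +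
(1/5760) * b1 * b2 * e2 * t^5 + (1/5760) * b1 * e1 * b2 * t^5 - (1/5760) * b1^2 * e2 * t^5 -
(1/34560) * b1^2 * a2^2 * t^5 + (1/2400) * a1 * e2^2 * t^5 + (1/9600) * a1 * a2^2 * e2 * t^5 +
(1/172800) * a1 * a2^4 * t^5 - (1/2400) * a1 * e1 * e2 * t^5 + (1/17280) * a1 * b1 * a2 * b2 *
t^5 - (1/34560) * a1^2 * b2^2 * t^5 - (1/172800) * a1^2 * a2^3 * t^5 + (1/9600) * a1^2 * e1 *
a2 * t^5 - (1/9600) * a1^3 * e2 * t^5 - (1/172800) * a1^3 * a2^2 * t^5 + (1/172800) * a1^4 * a2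
* t^5 - (1/9600) * e1 * b2 * e2 * t^6 - (1/38400) * e1 * a2^2 * b2 * t^6 + (1/9600) * e1^2 * b2
* t^6 + (1/9600) * b1 * e2^2 * t^6 + (1/38400) * b1 * a2^2 * e2 * t^6 + (1/691200) * b1 * a2^4
* t^6 - (1/9600) * b1 * e1 * e2 * t^6 - (1/57600) * b1 * e1 * a2^2 * t^6 + (1/57600) * a1 * e1
* a2 * b2 * t^6 + (1/57600) * a1 * b1 * a2 * e2 * t^6 + (1/345600) * a1 * b1 * a2^3 * t^6 -
(1/57600) * a1^2 * b2 * e2 * t^6 - (1/230400) * a1^2 * a2^2 * b2 * t^6 + (1/38400) * a1^2 * e1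
* b2 * t^6 - (1/38400) * a1^2 * b1 * e2 * t^6 - (1/230400) * a1^2 * b1 * a2^2 * t^6 +
(1/345600) * a1^3 * a2 * b2 * t^6 + (1/691200) * a1^4 * b2 * t^6) := by
      funext t
      rw [hC]
      ring
    rw [heq]
    exact (((hP1.const_mul_left 2).sub hP2).sub hP3).add hGtail
  -- denominator estimate
  have hs1 : (fun t => j₁ t - t) =o[L] fun t => t ^ 2 := MLT.jsub hJ1
  have hs2 : (fun t => j₂ t - t) =o[L] fun t => t ^ 2 := MLT.jsub hJ2
  have hsav : (fun t => jav t - t) =o[L] fun t => t ^ 2 := MLT.jsub hJav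
  have hDen : (fun t => jav t * j₁ t * j₂ t - t ^ 3) =o[L] fun t => t ^ 3 := by
    have heq : (fun t => jav t * j₁ t * j₂ t - t ^ 3)
        = fun t => ((jav t - t) * j₁ t) * j₂ t + (t * (j₁ t - t)) * j₂ t
            + (t * t) * (j₂ t - t) := by funext t; ring
    rw [heq]
    have t1 : (fun t => ((jav t - t) * j₁ t) * j₂ t) =o[L] fun t => t ^ 3 := by
      have := MLT.olo_mul_obo (MLT.olo_mul_obo hsav hj1O) hj2O
      exact MLT.mono (by simpa using this) (by norm_num)
    have t2 : (fun t => (t * (j₁ t - t)) * j₂ t) =o[L] fun t => t ^ 3 := by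
      have := MLT.olo_mul_obo (MLT.obo_mul_olo MLT.id_O hs1) hj2O
      exact MLT.mono (by simpa using this) (by norm_num)
    have t3 : (fun t => (t * t) * (j₂ t - t)) =o[L] fun t => t ^ 3 := by
      have := MLT.obo_mul_olo (MLT.obo_mul_obo MLT.id_O MLT.id_O) hs2
      exact MLT.mono (by simpa using this) (by norm_num)
    exact (t1.add t2).add t3
  -- eventual positivity of denominators
  have hmem : Set.Ioc (0:ℝ) T ∈ L := Ioc_mem_nhdsGT_of_mem ⟨le_refl 0, hT⟩
  have hevent : ∀ᶠ t in L, 0 < t ∧ t ≤ T ∧ 0 < j₁ t ∧ 0 < j₂ t ∧ 0 < jav t := by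
    filter_upwards [hmem] with t ht
    exact ⟨ht.1, ht.2, hpos₁ t ht, hpos₂ t ht, hposav t ht⟩
  -- N - C t^3 * Den = o(t^6)
  have hNmCD : (fun t => 2 * (dav t * j₁ t * j₂ t) - d₁ t * jav t * j₂ t
      - d₂ t * jav t * j₁ t - C * t ^ 3 * (jav t * j₁ t * j₂ t)) =o[L] fun t => t ^ 6 := by
    have h2 : (fun t => (C * t ^ 3) * (jav t * j₁ t * j₂ t - t ^ 3)) =o[L] fun t => t ^ 6 := by
      have hb : (fun t : ℝ => C * t ^ 3) =O[L] fun t => t ^ 3 :=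
        (isBigO_refl (fun t : ℝ => t ^ 3) L).const_mul_left C
      have := MLT.obo_mul_olo hb hDen
      simpa using this
    have heq : (fun t => 2 * (dav t * j₁ t * j₂ t) - d₁ t * jav t * j₂ t
        - d₂ t * jav t * j₁ t - C * t ^ 3 * (jav t * j₁ t * j₂ t))
        = fun t => (2 * (dav t * j₁ t * j₂ t) - d₁ t * jav t * j₂ t
            - d₂ t * jav t * j₁ t - C * t ^ 6)
          - ((C * t ^ 3) * (jav t * j₁ t * j₂ t - t ^ 3)) := by funext t; ring
    rw [heq]
    exact hNum.sub h2
  have hne6 : ∀ᶠ t : ℝ in L, (t : ℝ) ^ 6 = 0 → (2 * (dav t * j₁ t * j₂ t) - d₁ t * jav t * j₂ t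
      - d₂ t * jav t * j₁ t - C * t ^ 3 * (jav t * j₁ t * j₂ t)) = 0 := by
    filter_upwards [self_mem_nhdsWithin] with t ht h6
    exact absurd h6 (pow_ne_zero 6 (ne_of_gt ht))
  have h1 : Tendsto (fun t => (2 * (dav t * j₁ t * j₂ t) - d₁ t * jav t * j₂ t
      - d₂ t * jav t * j₁ t - C * t ^ 3 * (jav t * j₁ t * j₂ t)) / t ^ 6) L (nhds 0) :=
    (isLittleO_iff_tendsto' hne6).mp hNmCD
  have hne3 : ∀ᶠ t : ℝ in L, (t : ℝ) ^ 3 = 0 → (jav t * j₁ t * j₂ t - t ^ 3) = 0 := by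
    filter_upwards [self_mem_nhdsWithin] with t ht h3
    exact absurd h3 (pow_ne_zero 3 (ne_of_gt ht))
  have hDlim : Tendsto (fun t => jav t * j₁ t * j₂ t / t ^ 3) L (nhds 1) := by
    have h0 := (isLittleO_iff_tendsto' hne3).mp hDen
    have := h0.add (tendsto_const_nhds (x := (1:ℝ)))
    rw [zero_add] at this
    apply this.congr'
    filter_upwards [self_mem_nhdsWithin] with t ht
    have htne : t ≠ 0 := ne_of_gt ht
    field_simp
    ring
  have hDinv : Tendsto (fun t => t ^ 3 / (jav t * j₁ t * j₂ t)) L (nhds 1) := by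
    have := hDlim.inv₀ one_ne_zero
    rw [inv_one] at this
    apply this.congr
    intro t
    rw [inv_div]
  have hmain : Tendsto (fun t => ((2 * dav t / jav t - d₁ t / j₁ t - d₂ t / j₂ t)
      - C * t ^ 3) / t ^ 3) L (nhds 0) := by
    have hprod := h1.mul hDinv
    rw [zero_mul] at hprod
    apply hprod.congr'
    filter_upwards [hevent] with t ⟨ht0, htT, hp1, hp2, hpav⟩
    have htne : t ≠ 0 := ne_of_gt ht0
    field_simp
  have part1 : (fun t => (2 * dav t / jav t - d₁ t / j₁ t - d₂ t / j₂ t)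
      - C * t ^ 3) =o[L] fun t => t ^ 3 := by
    have hne : ∀ᶠ t : ℝ in L, (t : ℝ) ^ 3 = 0 →
        ((2 * dav t / jav t - d₁ t / j₁ t - d₂ t / j₂ t) - C * t ^ 3) = 0 := by
      filter_upwards [self_mem_nhdsWithin] with t ht h3
      exact absurd h3 (pow_ne_zero 3 (ne_of_gt ht))
    exact (isLittleO_iff_tendsto' hne).mpr hmain
  constructor
  · exact part1
  · have hsmall := part1.def (half_pos hCpos)
    filter_upwards [hsmall, self_mem_nhdsWithin] with t hts ht0
    have ht0' : (0:ℝ) < t := ht0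
    have htp : (0:ℝ) < t ^ 3 := pow_pos ht0' 3
    rw [Real.norm_eq_abs, Real.norm_eq_abs, abs_of_pos htp] at hts
    have := abs_le.mp hts
    nlinarith [this.1, this.2]
end

section
/- For the function sn(k,t) defined by sn(k,t) = sin(√k·t)/√k for k>0 and t ≤ π/√k, sn(k,t)=0 for k>0 and t ≥ π/√k, sn(0,t)=t, and sn(k,t)=sinh(√(−k)·t)/√(−k) for k<0, the following holds: for fixed t > 0, sn(k,t) is nonincreasing in k, i.e., k₁ ≤ k₂ implies sn(k₁,t) ≥ sn(k₂,t). -/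
/-!
With `a = √|k|` one has `sn k t = t · φ (a t)`, where `φ x = sin x / x` for `k > 0` and
`φ x = sinh x / x` for `k < 0`. These are slopes of secants through the origin, so concavity of
`sin` on `[0, π]` makes `φ` antitone there and convexity of `sinh` on `[0, ∞)` makes it monotone;
as `a` grows with `k` for `k > 0` and shrinks for `k < 0`, `sn` decreases in `k` on both sides.
Where the sine branch has been truncated, `sn = 0` lies below all values, as `sn ≥ 0` for `t ≥ 0`.
The two sides meet at `sn 0 t = t`, with `sn k t ≤ t` for `k ≥ 0` and `t ≤ sn k t` for `k ≤ 0`.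
-/

noncomputable def sn (k t : ℝ) : ℝ :=
  if 0 < k then
    (if t ≤ Real.pi / Real.sqrt k then Real.sin (Real.sqrt k * t) / Real.sqrt k else 0)
  else if k = 0 then t
  else Real.sinh (Real.sqrt (-k) * t) / Real.sqrt (-k)

open Real Set

lemma Real.antitoneOn_sin_div_self : AntitoneOn (fun x ↦ sin x / x) (Ioc 0 π) := by
  have h := strictConcaveOn_sin_Icc.concaveOn.slope_anti (x := 0) ⟨le_rfl, pi_pos.le⟩
  refine (h.mono fun x hx ↦ ⟨Ioc_subset_Icc_self hx, hx.1.ne'⟩).congr fun x _ ↦ ?_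
  simp [slope_def_field]

lemma Real.convexOn_sinh_Ici : ConvexOn ℝ (Ici 0) sinh := by
  refine MonotoneOn.convexOn_of_deriv (convex_Ici 0) continuous_sinh.continuousOn
    differentiable_sinh.differentiableOn ?_
  rw [deriv_sinh, interior_Ici]
  exact cosh_strictMonoOn.monotoneOn.mono Ioi_subset_Ici_self

lemma Real.monotoneOn_sinh_div_self : MonotoneOn (fun x ↦ sinh x / x) (Ioi 0) := by
  have h := convexOn_sinh_Ici.slope_mono (x := 0) self_mem_Ici
  refine (h.mono fun x hx ↦ ⟨Ioi_subset_Ici_self hx, ne_of_gt hx⟩).congr fun x _ ↦ ?_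
  simp [slope_def_field]

lemma comp_mul_div_eq_mul_div_mul (f : ℝ → ℝ) {a t : ℝ} (ht : t ≠ 0) :
    f (a * t) / a = t * (f (a * t) / (a * t)) := by
  field_simp

section sn

variable {k t : ℝ}

lemma sn_of_pos_of_le (hk : 0 < k) (ht : t ≤ π / √k) : sn k t = sin (√k * t) / √k := by
  rw [sn, if_pos hk, if_pos ht]

lemma sn_of_pos_of_lt (hk : 0 < k) (ht : π / √k < t) : sn k t = 0 := by
  rw [sn, if_pos hk, if_neg ht.not_ge]

@[simp]
lemma sn_zero_left (t : ℝ) : sn 0 t = t := by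
  simp [sn]

lemma sn_of_neg (hk : k < 0) : sn k t = sinh (√(-k) * t) / √(-k) := by
  rw [sn, if_neg hk.not_gt, if_neg hk.ne]

lemma sn_nonneg (ht : 0 ≤ t) : 0 ≤ sn k t := by
  rcases lt_trichotomy k 0 with hk | rfl | hk
  · rw [sn_of_neg hk]
    exact div_nonneg (sinh_nonneg_iff.2 (by positivity)) (sqrt_nonneg _)
  · simpa
  · by_cases hπ : t ≤ π / √k
    · have hsk : 0 < √k := sqrt_pos.2 hk
      rw [sn_of_pos_of_le hk hπ]
      exact div_nonneg (sin_nonneg_of_nonneg_of_le_pi (by positivity)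
        ((le_div_iff₀' hsk).1 hπ)) hsk.le
    · rw [sn_of_pos_of_lt hk (not_le.1 hπ)]

lemma sn_le_self (hk : 0 ≤ k) (ht : 0 ≤ t) : sn k t ≤ t := by
  rcases hk.eq_or_lt with rfl | hk
  · simp
  by_cases hπ : t ≤ π / √k
  · have hsk : 0 < √k := sqrt_pos.2 hk
    rw [sn_of_pos_of_le hk hπ, div_le_iff₀' hsk]
    exact sin_le (by positivity)
  · rw [sn_of_pos_of_lt hk (not_le.1 hπ)]
    exact ht

lemma self_le_sn (hk : k ≤ 0) (ht : 0 ≤ t) : t ≤ sn k t := by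
  rcases hk.eq_or_lt with rfl | hk
  · simp
  have hsk : 0 < √(-k) := sqrt_pos.2 (neg_pos.2 hk)
  rw [sn_of_neg hk, le_div_iff₀' hsk]
  exact self_le_sinh_iff.2 (by positivity)

lemma sn_antitoneOn_Ici (ht : 0 < t) : AntitoneOn (sn · t) (Ici 0) := by
  intro k₁ hk₁ k₂ hk₂ hk
  dsimp only
  rcases (mem_Ici.1 hk₁).eq_or_lt with rfl | hk₁
  · simpa using sn_le_self hk₂ ht.le
  have hk₂ : 0 < k₂ := hk₁.trans_le hk
  by_cases hπ : t ≤ π / √k₂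
  · have hπ₁ : t ≤ π / √k₁ := hπ.trans (by gcongr)
    have hx₁ : √k₁ * t ∈ Ioc 0 π := ⟨by positivity, (le_div_iff₀' (sqrt_pos.2 hk₁)).1 hπ₁⟩
    have hx₂ : √k₂ * t ∈ Ioc 0 π := ⟨by positivity, (le_div_iff₀' (sqrt_pos.2 hk₂)).1 hπ⟩
    rw [sn_of_pos_of_le hk₁ hπ₁, sn_of_pos_of_le hk₂ hπ, comp_mul_div_eq_mul_div_mul sin ht.ne',
      comp_mul_div_eq_mul_div_mul sin ht.ne']
    exact mul_le_mul_of_nonneg_left (antitoneOn_sin_div_self hx₁ hx₂ (by gcongr)) ht.le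
  · exact (sn_of_pos_of_lt hk₂ (not_le.1 hπ)).trans_le (sn_nonneg ht.le)

lemma sn_antitoneOn_Iic (ht : 0 < t) : AntitoneOn (sn · t) (Iic 0) := by
  intro k₁ hk₁ k₂ hk₂ hk
  dsimp only
  rcases (mem_Iic.1 hk₂).eq_or_lt with rfl | hk₂
  · simpa using self_le_sn hk₁ ht.le
  have hk₁ : k₁ < 0 := hk.trans_lt hk₂
  have hx₂ : 0 < √(-k₂) * t := mul_pos (sqrt_pos.2 (neg_pos.2 hk₂)) ht
  have hx₁ : 0 < √(-k₁) * t := mul_pos (sqrt_pos.2 (neg_pos.2 hk₁)) ht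
  rw [sn_of_neg hk₁, sn_of_neg hk₂, comp_mul_div_eq_mul_div_mul sinh ht.ne',
    comp_mul_div_eq_mul_div_mul sinh ht.ne']
  exact mul_le_mul_of_nonneg_left (monotoneOn_sinh_div_self hx₂ hx₁ (by gcongr)) ht.le

lemma sn_antitone_left (ht : 0 < t) : Antitone (sn · t) := by
  rw [← antitoneOn_univ, ← Iic_union_Ici (a := (0 : ℝ))]
  exact (sn_antitoneOn_Iic ht).union_right (sn_antitoneOn_Ici ht) isGreatest_Iic isLeast_Ici

end sn

theorem sn_antitone_in_k (t : ℝ) (ht : 0 < t) :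
    ∀ k₁ k₂ : ℝ, k₁ ≤ k₂ → sn k₂ t ≤ sn k₁ t :=
  fun _ _ hk ↦ sn_antitone_left ht hk
end

section
/- Let f : ℝ → ℝ defined by f(ψ) = 1 − (1/4)·(1/6 + (1/2)(cos²ψ − sin²ψ)²). Then f attains its maximum value 23/24 at ψ = π/4, and consequently the bound ⟨θ⟩² ≤ 3·max_ψ f(ψ) = 23/8 is strictly between the Bishop-Gromov value 3 and the true squared growth rate 2 for ℍ²×ℍ². -/
/-! Since `cos² ψ - sin² ψ = cos 2ψ`, the function is `23/24 - cos² 2ψ / 8`: it is at most `23/24`,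
with equality exactly where `cos 2ψ = 0`, e.g. at `ψ = π/4`. -/

open Real

lemma one_sub_quarter_mul_eq_cos_two_mul_sq (ψ : ℝ) :
    1 - (1 / 4) * (1 / 6 + (1 / 2) * (cos ψ ^ 2 - sin ψ ^ 2) ^ 2) = 23 / 24 - cos (2 * ψ) ^ 2 / 8 := by
  rw [cos_two_mul']
  ring

theorem H2H2_bound_evaluation
    (f : ℝ → ℝ)
    (hf : ∀ ψ, f ψ = 1 - (1 / 4) * (1 / 6 + (1 / 2) * (Real.cos ψ ^ 2 - Real.sin ψ ^ 2) ^ 2)) :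
    f (Real.pi / 4) = 23 / 24 ∧ (∀ ψ, f ψ ≤ 23 / 24) ∧
    (3 : ℝ) * (23 / 24) = 23 / 8 ∧ (2 : ℝ) < 23 / 8 ∧ (23 : ℝ) / 8 < 3 := by
  have hf' (ψ : ℝ) : f ψ = 23 / 24 - cos (2 * ψ) ^ 2 / 8 := (hf ψ).trans (one_sub_quarter_mul_eq_cos_two_mul_sq ψ)
  refine ⟨?_, fun ψ => ?_, by norm_num, by norm_num, by norm_num⟩
  · rw [hf', show 2 * (π / 4) = π / 2 by ring, cos_pi_div_two]
    norm_num
  · rw [hf']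
    linarith [sq_nonneg (cos (2 * ψ))]
end
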